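/- arXiv:1207.6018 — 13 statements merged into one kernel-verified Lean document; each statement's English description precedes it below -/
import Mathlib

section
/- Let s ≥ 1 and let a, b : Fin s → ℕ with a ≠ b. The following are equivalent: (i) there exist positive reals k_1,…,k_s, l_1,…,l_s, κ and two distinct points x, x' in the open positive orthant of ℝ^s such that f(x) = 0 and f(x') = 0, where f_i(z) = k_i − l_i z_i + κ((b_i : ℝ) − (a_i : ℝ)) ∏_j z_j^{a_j}; (ii) ∑_{i : a_i < b_i} a_i > 1. -/
open Finset

private lemma sum_eq_one_nat' {ι : Type*} [DecidableEq ι] (t : Finset ι) (n : ι → ℕ)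
    (h : ∑ i ∈ t, n i = 1) :
    ∃ p ∈ t, n p = 1 ∧ ∀ i ∈ t, i ≠ p → n i = 0 := by
  have hne : ∃ p ∈ t, n p ≠ 0 := by
    by_contra hc
    push_neg at hc
    have : ∑ i ∈ t, n i = 0 := Finset.sum_eq_zero (by simpa using hc)
    omega
  obtain ⟨p, hp, hpne⟩ := hne
  have hsplit : n p + ∑ i ∈ t.erase p, n i = 1 := by
    rw [Finset.add_sum_erase t n hp] at *; exact h
  have hnp : n p = 1 := by omega
  have hrest : ∑ i ∈ t.erase p, n i = 0 := by omega
  refine ⟨p, hp, hnp, fun i hi hip => ?_⟩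
  exact Finset.sum_eq_zero_iff.mp hrest i (Finset.mem_erase.mpr ⟨hip, hi⟩)

private lemma weier' {ι : Type*} (t : Finset ι) (f : ι → ℝ) (n : ι → ℕ)
    (h0 : ∀ i ∈ t, 0 ≤ f i) (h1 : ∀ i ∈ t, f i ≤ 1) :
    1 - ∑ i ∈ t, (n i : ℝ) * f i ≤ ∏ i ∈ t, (1 - f i) ^ n i := by
  classical
  induction t using Finset.cons_induction with
  | empty => simp
  | cons j t hjt ih =>
    rw [Finset.sum_cons, Finset.prod_cons]
    have h0' : ∀ i ∈ t, 0 ≤ f i := fun i hi => h0 i (Finset.mem_cons.mpr (Or.inr hi))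
    have h1' : ∀ i ∈ t, f i ≤ 1 := fun i hi => h1 i (Finset.mem_cons.mpr (Or.inr hi))
    have hfj0 : 0 ≤ f j := h0 j (Finset.mem_cons_self j t)
    have hfj1 : f j ≤ 1 := h1 j (Finset.mem_cons_self j t)
    have ih' := ih h0' h1'
    have hsum0 : 0 ≤ ∑ i ∈ t, (n i : ℝ) * f i :=
      Finset.sum_nonneg fun i hi => mul_nonneg (Nat.cast_nonneg _) (h0' i hi)
    have hprod0 : 0 ≤ ∏ i ∈ t, (1 - f i) ^ n i :=
      Finset.prod_nonneg fun i hi => pow_nonneg (by linarith [h1' i hi]) _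
    have hbern : 1 - (n j : ℝ) * f j ≤ (1 - f j) ^ n j := by
      have := one_add_mul_le_pow (a := -f j) (by linarith) (n j)
      simpa [mul_comm, sub_eq_add_neg, mul_neg] using this
    have hRHS0 : (0:ℝ) ≤ (1 - f j) ^ n j * ∏ i ∈ t, (1 - f i) ^ n i :=
      mul_nonneg (pow_nonneg (by linarith) _) hprod0
    have hnjfj : (0:ℝ) ≤ (n j : ℝ) * f j := mul_nonneg (Nat.cast_nonneg _) hfj0
    by_cases hc : 1 - (n j : ℝ) * f j ≤ 0
    · linarith
    · push_neg at hc
      by_cases hc2 : 1 - ∑ i ∈ t, (n i : ℝ) * f i ≤ 0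
      · linarith
      · push_neg at hc2
        have : (1 - (n j : ℝ) * f j) * (1 - ∑ i ∈ t, (n i : ℝ) * f i) ≤
            (1 - f j) ^ n j * ∏ i ∈ t, (1 - f i) ^ n i :=
          mul_le_mul hbern ih' (le_of_lt hc2) (pow_nonneg (by linarith) _)
        nlinarith [mul_nonneg (le_of_lt hc) hsum0]

private lemma uniq_aux' (s : ℕ) (a b : Fin s → ℕ) (k : Fin s → ℝ) (L : ℝ) (κ : ℝ) (M M' : ℝ)
    (hk : ∀ i, 0 < k i) (hκ : 0 < κ)
    (hM : 0 < M) (hM' : 0 < M') (hlt : M < M')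
    (hpos : ∀ i, 0 < k i + κ * ((b i : ℝ) - a i) * M)
    (hpos' : ∀ i, 0 < k i + κ * ((b i : ℝ) - a i) * M')
    (heq : M * L = ∏ i, (k i + κ * ((b i : ℝ) - a i) * M) ^ a i)
    (heq' : M' * L = ∏ i, (k i + κ * ((b i : ℝ) - a i) * M') ^ a i)
    (hd : ∑ i ∈ Finset.univ.filter (fun i => a i < b i), a i ≤ 1) : False := by
  classical
  have hfac : ∀ i, ¬ a i < b i →
      (k i + κ * ((b i : ℝ) - a i) * M') ^ a i ≤ (k i + κ * ((b i : ℝ) - a i) * M) ^ a i := by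
    intro i hi
    apply pow_le_pow_left₀ (le_of_lt (hpos' i))
    have hc : ((b i : ℝ) - a i) ≤ 0 := by
      have : (b i : ℝ) ≤ a i := by exact_mod_cast Nat.le_of_not_lt hi
      linarith
    nlinarith [mul_nonpos_of_nonneg_of_nonpos (mul_nonneg hκ.le (sub_nonneg.mpr hlt.le)) hc]
  have hL : 0 < L := by
    have hP : 0 < ∏ i, (k i + κ * ((b i : ℝ) - a i) * M) ^ a i :=
      Finset.prod_pos fun i _ => pow_pos (hpos i) _
    rw [← heq] at hP
    nlinarith
  rcases Nat.le_one_iff_eq_zero_or_eq_one.mp hd with h0 | h1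
  · have hall : ∀ i, a i < b i → a i = 0 := by
      intro i hi
      exact Finset.sum_eq_zero_iff.mp h0 i (by simp [hi])
    have hPP : ∏ i, (k i + κ * ((b i : ℝ) - a i) * M') ^ a i ≤
        ∏ i, (k i + κ * ((b i : ℝ) - a i) * M) ^ a i := by
      apply Finset.prod_le_prod
      · intro i _; exact pow_nonneg (le_of_lt (hpos' i)) _
      · intro i _
        by_cases hi : a i < b i
        · simp [hall i hi]
        · exact hfac i hi
    rw [← heq, ← heq'] at hPP
    nlinarith
  · obtain ⟨p, hpmem, hap, hrest⟩ := sum_eq_one_nat' _ _ h1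
    have hQQ : ∏ i ∈ Finset.univ.erase p, (k i + κ * ((b i : ℝ) - a i) * M') ^ a i ≤
        ∏ i ∈ Finset.univ.erase p, (k i + κ * ((b i : ℝ) - a i) * M) ^ a i := by
      apply Finset.prod_le_prod
      · intro i _; exact pow_nonneg (le_of_lt (hpos' i)) _
      · intro i hi
        by_cases hib : a i < b i
        · have : a i = 0 := hrest i (by simp [hib]) (Finset.mem_erase.mp hi).1
          simp [this]
        · exact hfac i hib
    have hsplitP : ∏ i, (k i + κ * ((b i : ℝ) - a i) * M) ^ a i =
        (k p + κ * ((b p : ℝ) - a p) * M) *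
          ∏ i ∈ Finset.univ.erase p, (k i + κ * ((b i : ℝ) - a i) * M) ^ a i := by
      rw [← Finset.mul_prod_erase Finset.univ _ (Finset.mem_univ p), hap, pow_one]
    have hsplitP' : ∏ i, (k i + κ * ((b i : ℝ) - a i) * M') ^ a i =
        (k p + κ * ((b p : ℝ) - a p) * M') *
          ∏ i ∈ Finset.univ.erase p, (k i + κ * ((b i : ℝ) - a i) * M') ^ a i := by
      rw [← Finset.mul_prod_erase Finset.univ _ (Finset.mem_univ p), hap, pow_one]
    set Q := ∏ i ∈ Finset.univ.erase p, (k i + κ * ((b i : ℝ) - a i) * M) ^ a i with hQdef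
    set Q' := ∏ i ∈ Finset.univ.erase p, (k i + κ * ((b i : ℝ) - a i) * M') ^ a i with hQ'def
    set u := k p + κ * ((b p : ℝ) - a p) * M with hu
    set u' := k p + κ * ((b p : ℝ) - a p) * M' with hu'
    have hueq : M * u' < M' * u := by
      have : M * u' - M' * u = k p * (M - M') := by rw [hu, hu']; ring
      nlinarith [hk p]
    have hupos : 0 < u := hpos p
    have hQ'pos : 0 < Q' := Finset.prod_pos fun i _ => pow_pos (hpos' i) _
    have hkey : M' * (u * Q) = M * (u' * Q') := by
      rw [← hsplitP, ← hsplitP', ← heq, ← heq']; ring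
    nlinarith [mul_lt_mul_of_pos_left hueq hM',
      mul_le_mul_of_nonneg_left hQQ (le_of_lt (mul_pos hM' hupos))]

/-- The mass-action steady-state map of the fully open network
`{0 ⇄ X_i (1 ≤ i ≤ s), ∑ a_i X_i → ∑ b_i X_i}` with one irreversible non-flow reaction. -/
noncomputable def irrevSteadyStateMap (s : ℕ) (a b : Fin s → ℕ) (k l : Fin s → ℝ) (κ : ℝ)
    (z : Fin s → ℝ) (i : Fin s) : ℝ :=
  k i - l i * z i + κ * ((b i : ℝ) - (a i : ℝ)) * ∏ j, z j ^ (a j)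

private lemma construct' (s : ℕ) (a b : Fin s → ℕ)
    (hd : 1 < ∑ i ∈ Finset.univ.filter (fun i => a i < b i), a i) :
    ∃ (k l : Fin s → ℝ) (κ : ℝ) (x x' : Fin s → ℝ),
      (∀ i, 0 < k i) ∧ (∀ i, 0 < l i) ∧ 0 < κ ∧
      (∀ i, 0 < x i) ∧ (∀ i, 0 < x' i) ∧ x ≠ x' ∧
      (∀ i, irrevSteadyStateMap s a b k l κ x i = 0) ∧
      (∀ i, irrevSteadyStateMap s a b k l κ x' i = 0) := by
  classical
  set d := ∑ i ∈ Finset.univ.filter (fun i => a i < b i), a i with hdd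
  set S := ∑ i ∈ Finset.univ.filter (fun i => ¬ a i < b i), (a i + 1) * (a i - b i) with hSdef
  set mstar : ℝ := 2 * 4 ^ d with hmstar
  set K : ℝ := 2 * mstar * ((S : ℝ) + 1) with hKdef
  have h4d : (4:ℝ) ≤ 4 ^ d := by
    calc (4:ℝ) = 4 ^ 1 := (pow_one _).symm
    _ ≤ 4 ^ d := pow_le_pow_right₀ (by norm_num) (by omega)
  have hmge : (8:ℝ) ≤ mstar := by rw [hmstar]; linarith
  have hmpos : (0:ℝ) < mstar := by linarith
  have hKpos : (0:ℝ) < K := by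
    rw [hKdef]; positivity
  -- the one-parameter family of candidate steady states
  set zf : ℝ → Fin s → ℝ :=
    fun m i => if a i < b i then (1 + m) / 4 else 1 - ((a i : ℝ) - b i) * m / K with hzf
  -- bound on the perturbation term
  have hbnd : ∀ m ∈ Set.Icc (0:ℝ) mstar, ∀ i, ¬ a i < b i →
      0 ≤ ((a i : ℝ) - b i) * m / K ∧ ((a i : ℝ) - b i) * m / K ≤ 1 / 2 := by
    intro m hm i hi
    have hba : b i ≤ a i := Nat.le_of_not_lt hi
    have hcast : ((a i : ℝ) - b i) = ((a i - b i : ℕ) : ℝ) := (Nat.cast_sub hba).symm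
    have hSle : (a i - b i : ℕ) ≤ S := by
      calc (a i - b i : ℕ) ≤ (a i + 1) * (a i - b i) := Nat.le_mul_of_pos_left _ (by omega)
      _ ≤ S := Finset.single_le_sum (f := fun j => (a j + 1) * (a j - b j))
          (fun j _ => Nat.zero_le _) (Finset.mem_filter.mpr ⟨Finset.mem_univ i, hi⟩)
    have hSleR : ((a i : ℝ) - b i) ≤ (S : ℝ) + 1 := by
      rw [hcast]
      have : ((a i - b i : ℕ) : ℝ) ≤ (S : ℝ) := by exact_mod_cast hSle
      linarith
    have habnn : (0:ℝ) ≤ (a i : ℝ) - b i := by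
      rw [hcast]; positivity
    constructor
    · apply div_nonneg (mul_nonneg habnn hm.1) hKpos.le
    · rw [div_le_iff₀ hKpos]
      have h1 : ((a i : ℝ) - b i) * m ≤ ((S : ℝ) + 1) * mstar :=
        mul_le_mul hSleR hm.2 hm.1 (by positivity)
      have h2 : ((S : ℝ) + 1) * mstar = 1 / 2 * K := by rw [hKdef]; ring
      linarith
  -- positivity and boundedness of coordinates
  have hzpos : ∀ m ∈ Set.Icc (0:ℝ) mstar, ∀ i, 0 < zf m i := by
    intro m hm i
    rw [hzf]
    by_cases hi : a i < b i
    · simp only [if_pos hi]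
      have := hm.1
      linarith
    · simp only [if_neg hi]
      have := (hbnd m hm i hi).2
      linarith
  -- the product as a function of m
  set g : ℝ → ℝ := fun m => ∏ i, zf m i ^ a i with hg
  have hcont : Continuous fun m => g m - m := by
    apply Continuous.sub _ continuous_id
    apply continuous_finset_prod
    intro i _
    apply Continuous.pow
    rw [hzf]
    by_cases hi : a i < b i
    · simp only [if_pos hi]; fun_prop
    · simp only [if_neg hi]; fun_prop
  -- value at 0 is positive
  have hg0 : 0 < g 0 - 0 := by
    rw [sub_zero, hg]
    exact Finset.prod_pos fun i _ => pow_pos (hzpos 0 ⟨le_refl _, hmpos.le⟩ i) _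
  -- value at 3 is negative
  have h3mem : (3:ℝ) ∈ Set.Icc (0:ℝ) mstar := ⟨by norm_num, by linarith⟩
  have hg3 : g 3 - 3 < 0 := by
    have : g 3 ≤ 1 := by
      rw [hg]
      apply Finset.prod_le_one
      · intro i _; exact pow_nonneg (hzpos 3 h3mem i).le _
      · intro i _
        apply pow_le_one₀ (hzpos 3 h3mem i).le
        rw [hzf]
        by_cases hi : a i < b i
        · simp only [if_pos hi]; norm_num
        · simp only [if_neg hi]
          have := (hbnd 3 h3mem i hi).1
          linarith
    linarith
  -- product identity
  have hgid : ∀ m : ℝ, g m = ((1 + m) / 4) ^ d *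
      ∏ i ∈ Finset.univ.filter (fun i => ¬ a i < b i), zf m i ^ a i := by
    intro m
    simp only [hg]
    rw [← Finset.prod_filter_mul_prod_filter_not Finset.univ (fun i => a i < b i)]
    congr 1
    rw [hdd, ← Finset.prod_pow_eq_pow_sum]
    apply Finset.prod_congr rfl
    intro i hi
    rw [hzf]
    simp [Finset.mem_filter.mp hi]
  -- lower bound for the tail product
  have hNlow : ∀ m ∈ Set.Icc (0:ℝ) mstar,
      (1:ℝ)/2 ≤ ∏ i ∈ Finset.univ.filter (fun i => ¬ a i < b i), zf m i ^ a i := by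
    intro m hm
    have hrw : ∏ i ∈ Finset.univ.filter (fun i => ¬ a i < b i), zf m i ^ a i =
        ∏ i ∈ Finset.univ.filter (fun i => ¬ a i < b i),
          (1 - ((a i : ℝ) - b i) * m / K) ^ a i := by
      apply Finset.prod_congr rfl
      intro i hi
      rw [hzf]
      simp [Finset.mem_filter.mp hi]
    rw [hrw]
    have hW : 1 - ∑ i ∈ Finset.univ.filter (fun i => ¬ a i < b i),
          (a i : ℝ) * (((a i : ℝ) - b i) * m / K) ≤
        ∏ i ∈ Finset.univ.filter (fun i => ¬ a i < b i),
          (1 - ((a i : ℝ) - b i) * m / K) ^ a i :=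
      weier' (Finset.univ.filter (fun i => ¬ a i < b i))
        (fun i => ((a i : ℝ) - b i) * m / K) a
        (fun i hi => (hbnd m hm i (Finset.mem_filter.mp hi).2).1)
        (fun i hi => le_trans (hbnd m hm i (Finset.mem_filter.mp hi).2).2 (by norm_num))
    have hsum : ∑ i ∈ Finset.univ.filter (fun i => ¬ a i < b i),
        (a i : ℝ) * (((a i : ℝ) - b i) * m / K) ≤ 1 / 2 := by
      have hterm : ∀ i ∈ Finset.univ.filter (fun i => ¬ a i < b i),
          (a i : ℝ) * (((a i : ℝ) - b i) * m / K) ≤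
            (((a i + 1) * (a i - b i) : ℕ) : ℝ) * (m / K) := by
        intro i hi
        have hba : b i ≤ a i := Nat.le_of_not_lt (Finset.mem_filter.mp hi).2
        have hcast : ((a i : ℝ) - b i) = ((a i - b i : ℕ) : ℝ) := by rw [Nat.cast_sub hba]
        have hmK : 0 ≤ m / K := div_nonneg hm.1 hKpos.le
        have hnat : (a i : ℝ) * ((a i - b i : ℕ) : ℝ) ≤ (((a i + 1) * (a i - b i) : ℕ) : ℝ) := by
          push_cast
          nlinarith [Nat.cast_nonneg (α := ℝ) (a i - b i)]
        calc (a i : ℝ) * (((a i : ℝ) - b i) * m / K)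
            = (a i : ℝ) * ((a i - b i : ℕ) : ℝ) * (m / K) := by rw [hcast]; ring
        _ ≤ (((a i + 1) * (a i - b i) : ℕ) : ℝ) * (m / K) :=
            mul_le_mul_of_nonneg_right hnat hmK
      calc ∑ i ∈ Finset.univ.filter (fun i => ¬ a i < b i),
            (a i : ℝ) * (((a i : ℝ) - b i) * m / K)
          ≤ ∑ i ∈ Finset.univ.filter (fun i => ¬ a i < b i),
            (((a i + 1) * (a i - b i) : ℕ) : ℝ) * (m / K) := Finset.sum_le_sum hterm
      _ = (S : ℝ) * (m / K) := by
          rw [← Finset.sum_mul, hSdef]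
          push_cast
          ring
      _ ≤ 1 / 2 := by
          rw [mul_div_assoc', div_le_iff₀ hKpos, hKdef]
          have h0S : (0:ℝ) ≤ (S : ℝ) := Nat.cast_nonneg _
          nlinarith [mul_le_mul_of_nonneg_left hm.2 h0S, hmpos]
    linarith
    -- value at mstar is nonnegative
  have hmmem : mstar ∈ Set.Icc (0:ℝ) mstar := ⟨hmpos.le, le_refl _⟩
  have hgm : 0 ≤ g mstar - mstar := by
    have hNm := hNlow mstar hmmem
    have hp1 : (mstar / 4) ^ d ≤ ((1 + mstar) / 4) ^ d := by
      apply pow_le_pow_left₀ (by positivity)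
      linarith
    have h4pos : (0:ℝ) < 4 ^ d := by positivity
    have e1 : mstar ≤ mstar ^ (d - 1) := by
      calc mstar = mstar ^ 1 := (pow_one _).symm
      _ ≤ mstar ^ (d - 1) := pow_le_pow_right₀ (by linarith) (by omega)
    have e2 : mstar ^ d = mstar ^ (d - 1) * mstar := by
      rw [← pow_succ]
      congr 1
      omega
    have e3 : mstar * mstar ≤ mstar ^ d := by
      rw [e2]
      exact mul_le_mul_of_nonneg_right e1 hmpos.le
    have e4 : 2 * mstar ≤ (mstar / 4) ^ d := by
      rw [div_pow, le_div_iff₀ h4pos]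
      calc 2 * mstar * 4 ^ d = mstar * mstar := by rw [hmstar]; ring
      _ ≤ mstar ^ d := e3
    have e5 : (2 * mstar) * (1 / 2) ≤ ((1 + mstar) / 4) ^ d *
        ∏ i ∈ Finset.univ.filter (fun i => ¬ a i < b i), zf mstar i ^ a i := by
      apply mul_le_mul (le_trans e4 hp1) hNm (by norm_num)
      positivity
    rw [hgid mstar]
    linarith
  -- two roots via the intermediate value theorem
  obtain ⟨m1, hm1mem, hm1⟩ : ∃ m1 ∈ Set.Icc (0:ℝ) 3, g m1 - m1 = 0 := by
    have hsub := intermediate_value_Icc' (by norm_num : (0:ℝ) ≤ 3) hcont.continuousOn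
    have h0mem : (0:ℝ) ∈ Set.Icc (g 3 - 3) (g 0 - 0) := ⟨hg3.le, hg0.le⟩
    obtain ⟨m1, hmem, hval⟩ := hsub h0mem
    exact ⟨m1, hmem, hval⟩
  obtain ⟨m2, hm2mem, hm2⟩ : ∃ m2 ∈ Set.Icc (3:ℝ) mstar, g m2 - m2 = 0 := by
    have hsub := intermediate_value_Icc (by linarith : (3:ℝ) ≤ mstar) hcont.continuousOn
    have h0mem : (0:ℝ) ∈ Set.Icc (g 3 - 3) (g mstar - mstar) := ⟨hg3.le, hgm⟩
    obtain ⟨m2, hmem, hval⟩ := hsub h0mem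
    exact ⟨m2, hmem, hval⟩
  have hm1pos : 0 < m1 := by
    rcases eq_or_lt_of_le hm1mem.1 with h | h
    · exfalso
      rw [← h] at hm1
      linarith
    · exact h
  have hm2gt : 3 < m2 := by
    rcases eq_or_lt_of_le hm2mem.1 with h | h
    · exfalso
      rw [← h] at hm2
      linarith
    · exact h
  have hm1mem' : m1 ∈ Set.Icc (0:ℝ) mstar := ⟨hm1mem.1, by linarith [hm1mem.2]⟩
  have hm2mem' : m2 ∈ Set.Icc (0:ℝ) mstar := ⟨by linarith [hm2mem.1], hm2mem.2⟩
  have hm12 : m1 ≠ m2 := by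
    intro h
    rw [h] at hm1mem
    linarith [hm1mem.2]
  -- the filter is nonempty
  obtain ⟨i0, hi0⟩ : ∃ i0, a i0 < b i0 := by
    by_contra hc
    push_neg at hc
    have : d = 0 := by
      rw [hdd]
      apply Finset.sum_eq_zero
      intro i hi
      exact absurd (Finset.mem_filter.mp hi).2 (not_lt.mpr (hc i))
    omega
  -- witnesses
  refine ⟨fun i => if a i < b i then ((b i : ℝ) - a i) else K,
    fun i => if a i < b i then 4 * ((b i : ℝ) - a i) else K, 1,
    fun i => zf m1 i, fun i => zf m2 i, ?_, ?_, one_pos, ?_, ?_, ?_, ?_, ?_⟩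
  · intro i
    by_cases hi : a i < b i
    · simp only [if_pos hi]
      have : (a i : ℝ) < b i := by exact_mod_cast hi
      linarith
    · simp only [if_neg hi]; exact hKpos
  · intro i
    by_cases hi : a i < b i
    · simp only [if_pos hi]
      have : (a i : ℝ) < b i := by exact_mod_cast hi
      linarith
    · simp only [if_neg hi]; exact hKpos
  · intro i; exact hzpos m1 hm1mem' i
  · intro i; exact hzpos m2 hm2mem' i
  · intro h
    have := congrFun h i0
    simp only [hzf, if_pos hi0] at this
    apply hm12
    field_simp at this
    linarith
  · intro i
    have hprod : ∏ j, zf m1 j ^ a j = m1 := by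
      have : g m1 = m1 := by linarith
      rw [hg] at this
      exact this
    simp only [irrevSteadyStateMap, hprod]
    by_cases hi : a i < b i
    · simp only [hzf, if_pos hi]; ring
    · simp only [hzf, if_neg hi]
      have hK0 : K ≠ 0 := ne_of_gt hKpos
      field_simp
      ring
  · intro i
    have hprod : ∏ j, zf m2 j ^ a j = m2 := by
      have : g m2 = m2 := by linarith
      rw [hg] at this
      exact this
    simp only [irrevSteadyStateMap, hprod]
    by_cases hi : a i < b i
    · simp only [hzf, if_pos hi]; ring
    · simp only [hzf, if_neg hi]
      have hK0 : K ≠ 0 := ne_of_gt hKpos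
      field_simp
      ring

/-- A one-reaction fully open network with one irreversible non-flow reaction
`∑ a_i X_i → ∑ b_i X_i` admits multiple positive mass-action steady states if and only if
`∑_{i : a_i < b_i} a_i > 1`. -/
theorem irrev_multistationary_iff (s : ℕ) (hs : 1 ≤ s) (a b : Fin s → ℕ) (hab : a ≠ b) :
    (∃ (k l : Fin s → ℝ) (κ : ℝ) (x x' : Fin s → ℝ),
      (∀ i, 0 < k i) ∧ (∀ i, 0 < l i) ∧ 0 < κ ∧
      (∀ i, 0 < x i) ∧ (∀ i, 0 < x' i) ∧ x ≠ x' ∧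
      (∀ i, irrevSteadyStateMap s a b k l κ x i = 0) ∧
      (∀ i, irrevSteadyStateMap s a b k l κ x' i = 0)) ↔
    1 < ∑ i ∈ Finset.univ.filter (fun i => a i < b i), a i := by
  classical
  constructor
  · -- forward: multistationarity implies the arithmetic condition
    rintro ⟨k, l, κ, x, x', hk, hl, hκ, hx, hx', hne, hss, hss'⟩
    by_contra hdle
    push_neg at hdle
    set M := ∏ j, x j ^ a j with hM
    set M' := ∏ j, x' j ^ a j with hM'
    have hMpos : 0 < M := Finset.prod_pos fun j _ => pow_pos (hx j) _
    have hM'pos : 0 < M' := Finset.prod_pos fun j _ => pow_pos (hx' j) _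
    have hlx : ∀ i, l i * x i = k i + κ * ((b i : ℝ) - a i) * M := by
      intro i
      have := hss i
      simp only [irrevSteadyStateMap] at this
      rw [← hM] at this
      linarith
    have hlx' : ∀ i, l i * x' i = k i + κ * ((b i : ℝ) - a i) * M' := by
      intro i
      have := hss' i
      simp only [irrevSteadyStateMap] at this
      rw [← hM'] at this
      linarith
    have hpos : ∀ i, 0 < k i + κ * ((b i : ℝ) - a i) * M := by
      intro i; rw [← hlx i]; exact mul_pos (hl i) (hx i)
    have hpos' : ∀ i, 0 < k i + κ * ((b i : ℝ) - a i) * M' := by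
      intro i; rw [← hlx' i]; exact mul_pos (hl i) (hx' i)
    set L := ∏ i, l i ^ a i with hLdef
    have heq : M * L = ∏ i, (k i + κ * ((b i : ℝ) - a i) * M) ^ a i := by
      rw [hM, hLdef, ← Finset.prod_mul_distrib]
      apply Finset.prod_congr rfl
      intro i _
      rw [← mul_pow, mul_comm (x i) (l i), hlx i]
    have heq' : M' * L = ∏ i, (k i + κ * ((b i : ℝ) - a i) * M') ^ a i := by
      rw [hM', hLdef, ← Finset.prod_mul_distrib]
      apply Finset.prod_congr rfl
      intro i _
      rw [← mul_pow, mul_comm (x' i) (l i), hlx' i]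
    have hMne : M ≠ M' := by
      intro hMM
      apply hne
      funext i
      have h1 := hlx i
      have h2 := hlx' i
      rw [← hMM] at h2
      have := h1.trans h2.symm
      exact mul_left_cancel₀ (ne_of_gt (hl i)) this
    rcases hMne.lt_or_gt with hlt | hlt
    · exact uniq_aux' s a b k L κ M M' hk hκ hMpos hM'pos hlt hpos hpos' heq heq' hdle
    · exact uniq_aux' s a b k L κ M' M hk hκ hM'pos hMpos hlt hpos' hpos heq' heq hdle
  · -- backward: construction
    exact construct' s a b
end

section
/- Let s ≥ 1 and let a, b : Fin s → ℕ with a ≠ b and ∑_{i : a_i < b_i} a_i > 1. Then there exist positive reals k_1,…,k_s, l_1,…,l_s, κ and two distinct points x, x' in the open positive orthant of ℝ^s such that f(x) = 0, f(x') = 0, and the s×s Jacobian matrix (∂f_i/∂z_j) of f is invertible at both x and x', where f_i(z) = k_i − l_i z_i + κ((b_i : ℝ) − (a_i : ℝ)) ∏_j z_j^{a_j}. -/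
/-- The Jacobian matrix `(∂f_i/∂z_j)` of the steady-state map at a point `x`. -/
noncomputable def irrevJacobian (s : ℕ) (a b : Fin s → ℕ) (k l : Fin s → ℝ) (κ : ℝ)
    (x : Fin s → ℝ) : Matrix (Fin s) (Fin s) ℝ :=
  Matrix.of fun i j =>
    deriv (fun t => irrevSteadyStateMap s a b k l κ (Function.update x j t) i) (x j)

/-!
Write `c = b - a` and `p z = ∏ j, z j ^ a j`, so that the Jacobian at a point with nonzero
coordinates is `-diagonal l + κ c (∇p)ᵀ`. Given two positive points `x`, `y`, the rates
`l i = κ c i (p x - p y) / (x i - y i)` and `k i = l i x i - κ c i p x` make both of them steady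
states, and the matrix determinant lemma shows that the Jacobian at `z` is then invertible exactly
when `∇p z ⬝ᵥ (x - y) ≠ p x - p y`: the derivative of `p` along the secant differs from its slope.

Take `x i = 2` where `a i < b i`, `y i = 1 + E` where `b i < a i`, and all other coordinates `1`.
Then `x i - y i` has the sign of `c i`, so the rates `l` are positive, and so are the `k` as long
as `p y < p x / 2`. With `M = ∑_{a i < b i} a i ≥ 2`, as `E → 0` the slope tends to `2 ^ M - 1`
and the two derivatives to `2 ^ M * M / 2` and `M`; since `M < 2 ^ M - 1 < 2 ^ M * M / 2`, every
small `E > 0` works.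
-/

open Finset Matrix Filter Topology

section Monomial

variable {ι : Type*} [Fintype ι] [DecidableEq ι]

lemma prod_pow_update (a : ι → ℕ) (x : ι → ℝ) (j : ι) (t : ℝ) :
    ∏ m, Function.update x j t m ^ a m = t ^ a j * ∏ m ∈ univ.erase j, x m ^ a m := by
  rw [← mul_prod_erase univ _ (mem_univ j), Function.update_self]
  congr 1
  exact prod_congr rfl fun m hm => by rw [Function.update_of_ne (ne_of_mem_erase hm)]

lemma hasDerivAt_prod_pow_update (a : ι → ℕ) {x : ι → ℝ} {j : ι} (hx : x j ≠ 0) :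
    HasDerivAt (fun t => ∏ m, Function.update x j t m ^ a m)
      (a j * (∏ m, x m ^ a m) / x j) (x j) := by
  have hderiv : (a j : ℝ) * x j ^ (a j - 1) * ∏ m ∈ univ.erase j, x m ^ a m
      = a j * (∏ m, x m ^ a m) / x j := by
    rw [← mul_prod_erase univ _ (mem_univ j)]
    rcases eq_or_ne (a j) 0 with h | h
    · simp [h]
    · rw [← pow_sub_one_mul h]
      field_simp
  simp_rw [prod_pow_update]
  exact ((hasDerivAt_pow (a j) (x j)).mul_const _).congr_deriv hderiv

end Monomial

lemma isUnit_diagonal_add_vecMulVec {n K : Type*} [Fintype n] [DecidableEq n] [Field K]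
    {d : n → K} (hd : ∀ i, d i ≠ 0) (u v : n → K) (h : 1 + v ⬝ᵥ (u / d) ≠ 0) :
    IsUnit (diagonal d + vecMulVec u v) := by
  have hfactor : diagonal d + vecMulVec u v =
      diagonal d * (1 + vecMulVec (u / d) v) := by
    ext i j
    simp only [Matrix.add_apply, diagonal_apply, vecMulVec_apply, diagonal_mul, one_apply,
      Pi.div_apply, mul_add, mul_ite, mul_one, mul_zero, add_right_inj]
    rw [← mul_assoc, mul_div_cancel₀ _ (hd i)]
  rw [hfactor, isUnit_iff_isUnit_det, det_mul, det_diagonal, vecMulVec_eq Unit,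
    det_one_add_replicateCol_mul_replicateRow, isUnit_iff_ne_zero]
  exact mul_ne_zero (prod_ne_zero_iff.2 fun i _ => hd i) h

section Orders

variable {ι : Type*} [Fintype ι] (a b : ι → ℕ)

def producedOrder : ℕ := ∑ i ∈ univ.filter (fun i => a i < b i), a i

def consumedOrder : ℕ := ∑ i ∈ univ.filter (fun i => b i < a i), a i

lemma prod_pow_ite_one {M : Type*} [CommMonoid M] (p : ι → Prop) [DecidablePred p] (t : M) :
    ∏ j, (if p j then t else 1) ^ a j = t ^ ∑ j ∈ univ.filter p, a j := by
  simp [ite_pow, prod_ite, prod_pow_eq_pow_sum]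

lemma sum_mul_ite_lt (α β : ℝ) :
    ∑ j, (a j : ℝ) * (if a j < b j then α else if b j < a j then β else 0) =
      producedOrder a b * α + consumedOrder a b * β := by
  have hsplit : ∀ j, (if a j < b j then α else if b j < a j then β else 0) =
      (if a j < b j then α else 0) + (if b j < a j then β else 0) := by
    intro j
    split_ifs <;> first | (exfalso; omega) | ring
  simp only [hsplit, mul_add, sum_add_distrib, mul_ite, mul_zero, ← sum_filter, ← sum_mul,
    producedOrder, consumedOrder, Nat.cast_sum]

end Orders

section Jacobian

variable {s : ℕ} {a b : Fin s → ℕ} {k l : Fin s → ℝ} {κ : ℝ}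

lemma irrevJacobian_eq {x : Fin s → ℝ} (hx : ∀ j, x j ≠ 0) :
    irrevJacobian s a b k l κ x = diagonal (-l) +
      vecMulVec (fun i => κ * ((b i : ℝ) - a i)) (fun j => a j * (∏ m, x m ^ a m) / x j) := by
  ext i j
  have hcoord : HasDerivAt (fun t => Function.update x j t i) (if i = j then 1 else 0) (x j) := by
    rcases eq_or_ne i j with rfl | hij
    · simpa using hasDerivAt_id' (x i)
    · simpa [Function.update_of_ne hij, hij] using hasDerivAt_const (x j) (x i)
  have hf : HasDerivAt
      (fun t => k i - l i * Function.update x j t i +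
        κ * ((b i : ℝ) - a i) * ∏ m, Function.update x j t m ^ a m)
      (0 - l i * (if i = j then 1 else 0) + κ * ((b i : ℝ) - a i) * (a j * (∏ m, x m ^ a m) / x j))
      (x j) :=
    ((hasDerivAt_const (x j) (k i)).sub (hcoord.const_mul (l i))).add
      ((hasDerivAt_prod_pow_update a (hx j)).const_mul _)
  rw [irrevJacobian, of_apply]
  simp only [irrevSteadyStateMap]
  rw [hf.deriv]
  rcases eq_or_ne i j with rfl | hij
  · simp [vecMulVec_apply]
  · simp [vecMulVec_apply, hij]

end Jacobian

noncomputable def secantOutflow {s : ℕ} (a b : Fin s → ℕ) (κ : ℝ) (x y : Fin s → ℝ) (i : Fin s) :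
    ℝ :=
  if x i = y i then 1
  else κ * ((b i : ℝ) - a i) * (∏ j, x j ^ a j - ∏ j, y j ^ a j) / (x i - y i)

noncomputable def secantInflow {s : ℕ} (a b : Fin s → ℕ) (κ : ℝ) (x y : Fin s → ℝ) (i : Fin s) :
    ℝ :=
  secantOutflow a b κ x y i * x i - κ * ((b i : ℝ) - a i) * ∏ j, x j ^ a j

section Secant

variable {s : ℕ} {a b : Fin s → ℕ} {k l : Fin s → ℝ} {κ : ℝ} {x y : Fin s → ℝ}

lemma secantOutflow_mul_sub (hxy : ∀ i, x i = y i → a i = b i) (i : Fin s) :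
    secantOutflow a b κ x y i * (x i - y i) =
      κ * ((b i : ℝ) - a i) * (∏ j, x j ^ a j - ∏ j, y j ^ a j) := by
  unfold secantOutflow
  split_ifs with h
  · simp [h, hxy i h]
  · exact div_mul_cancel₀ _ (sub_ne_zero.2 h)

lemma irrevSteadyStateMap_secant_left (i : Fin s) :
    irrevSteadyStateMap s a b (secantInflow a b κ x y) (secantOutflow a b κ x y) κ x i = 0 := by
  simp only [irrevSteadyStateMap, secantInflow]
  ring

lemma irrevSteadyStateMap_secant_right (hxy : ∀ i, x i = y i → a i = b i) (i : Fin s) :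
    irrevSteadyStateMap s a b (secantInflow a b κ x y) (secantOutflow a b κ x y) κ y i = 0 := by
  simp only [irrevSteadyStateMap, secantInflow]
  linear_combination secantOutflow_mul_sub (κ := κ) hxy i

lemma isUnit_irrevJacobian_of_secant {z : Fin s → ℝ} (hl : ∀ i, l i ≠ 0)
    (hsec : ∀ i, l i * (x i - y i) = κ * ((b i : ℝ) - a i) * (∏ j, x j ^ a j - ∏ j, y j ^ a j))
    (hp : ∏ j, x j ^ a j ≠ ∏ j, y j ^ a j) (hz : ∀ j, z j ≠ 0)
    (h : ∑ j, a j * (∏ m, z m ^ a m) / z j * (x j - y j) ≠ ∏ j, x j ^ a j - ∏ j, y j ^ a j) :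
    IsUnit (irrevJacobian s a b k l κ z) := by
  rw [irrevJacobian_eq hz]
  refine isUnit_diagonal_add_vecMulVec (d := -l) (fun i => neg_ne_zero.2 (hl i)) _ _ ?_
  have hΔ := sub_ne_zero.2 hp
  have hcoef : (fun i => κ * ((b i : ℝ) - a i)) / -l =
      fun i => -(x i - y i) / (∏ j, x j ^ a j - ∏ j, y j ^ a j) := by
    funext i
    simp only [Pi.div_apply, Pi.neg_apply]
    rw [div_eq_div_iff (neg_ne_zero.2 (hl i)) hΔ]
    linear_combination -(hsec i)
  rw [hcoef, dotProduct]
  simp only [mul_div_assoc', mul_neg, neg_div, sum_neg_distrib, ← sum_div]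
  rw [← sub_eq_add_neg, sub_ne_zero, ne_comm, ne_eq, div_eq_one_iff_eq hΔ]
  exact h

end Secant

lemma exists_small_pos_of_two_le {M N : ℕ} (hM : 2 ≤ M) :
    ∃ E : ℝ, 0 < E ∧ 2 * (1 + E) ^ N < 2 ^ M ∧
      2 ^ M - (1 + E) ^ N < 2 ^ M * (M / 2 - N * E) ∧
      (1 + E) ^ N * (M - N * (E / (1 + E))) < 2 ^ M - (1 + E) ^ N := by
  have hpow : (M : ℝ) + 2 ≤ 2 ^ M := by
    have h1 : M - 1 < 2 ^ (M - 1) := Nat.lt_two_pow_self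
    have h2 : 2 ^ M = 2 * 2 ^ (M - 1) := by rw [← pow_succ']; congr 1; omega
    exact_mod_cast (by omega : M + 2 ≤ 2 ^ M)
  have hM' : (2 : ℝ) ≤ M := by exact_mod_cast hM
  have h1 : ∀ᶠ E : ℝ in 𝓝 0, 2 * (1 + E) ^ N < 2 ^ M :=
    ContinuousAt.eventually_lt (by fun_prop) continuousAt_const (by norm_num; linarith)
  have h2 : ∀ᶠ E : ℝ in 𝓝 0, 2 ^ M - (1 + E) ^ N < 2 ^ M * ((M : ℝ) / 2 - N * E) :=
    ContinuousAt.eventually_lt (by fun_prop) (by fun_prop) (by norm_num; nlinarith)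
  have h3 : ∀ᶠ E : ℝ in 𝓝 0, (1 + E) ^ N * ((M : ℝ) - N * (E / (1 + E))) < 2 ^ M - (1 + E) ^ N :=
    ContinuousAt.eventually_lt (by fun_prop (disch := norm_num)) (by fun_prop)
      (by norm_num; linarith)
  obtain ⟨E, ⟨hE1, hE2, hE3⟩, hE⟩ :=
    (((h1.and (h2.and h3)).filter_mono nhdsWithin_le_nhds).and
      (eventually_mem_nhdsWithin (s := Set.Ioi 0))).exists
  exact ⟨E, hE, hE1, hE2, hE3⟩

section Witness

variable {s : ℕ} (a b : Fin s → ℕ) (E : ℝ)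

def highPoint : Fin s → ℝ := fun i => if a i < b i then 2 else 1

def lowPoint : Fin s → ℝ := fun i => if b i < a i then 1 + E else 1

lemma prod_pow_highPoint : ∏ j, highPoint a b j ^ a j = 2 ^ producedOrder a b :=
  prod_pow_ite_one a _ _

lemma prod_pow_lowPoint : ∏ j, lowPoint a b E j ^ a j = (1 + E) ^ consumedOrder a b :=
  prod_pow_ite_one a _ _

variable {a b E}

lemma highPoint_pos (i : Fin s) : 0 < highPoint a b i := by
  unfold highPoint; split_ifs <;> norm_num

lemma lowPoint_pos (hE : 0 < E) (i : Fin s) : 0 < lowPoint a b E i := by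
  unfold lowPoint; split_ifs <;> linarith

lemma highPoint_ne_lowPoint (h : 0 < producedOrder a b) : highPoint a b ≠ lowPoint a b E := by
  obtain ⟨i, hi, -⟩ := exists_ne_zero_of_sum_ne_zero h.ne'
  have hi : a i < b i := (mem_filter.1 hi).2
  intro heq
  have := congrFun heq i
  simp [highPoint, lowPoint, hi, hi.not_gt] at this

lemma eq_of_highPoint_eq_lowPoint (hE : 0 < E) (i : Fin s) :
    highPoint a b i = lowPoint a b E i → a i = b i := by
  rcases lt_trichotomy (a i) (b i) with h | h | h
  · simp [highPoint, lowPoint, h, h.not_gt]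
  · simp [h]
  · simp only [highPoint, h.not_gt, ↓reduceIte, lowPoint, h, left_eq_add]
    intro hE0
    linarith

lemma secantOutflow_highPoint_lowPoint_pos (hE : 0 < E)
    (hP : (1 + E) ^ consumedOrder a b < 2 ^ producedOrder a b) (i : Fin s) :
    0 < secantOutflow a b 1 (highPoint a b) (lowPoint a b E) i := by
  have hΔ := sub_pos.2 hP
  unfold secantOutflow
  rw [prod_pow_highPoint, prod_pow_lowPoint]
  rcases lt_trichotomy (a i) (b i) with h | h | h
  · simp only [highPoint, h, ↓reduceIte, lowPoint, h.not_gt, OfNat.ofNat_ne_one, one_mul, sub_pos,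
      Nat.one_lt_ofNat, div_pos_iff_of_pos_right, Nat.cast_lt, mul_pos_iff_of_pos_left]
    exact hP
  · simp [highPoint, lowPoint, h]
  · have hc : (b i : ℝ) < a i := by exact_mod_cast h
    simp only [highPoint, h.not_gt, ↓reduceIte, lowPoint, h, left_eq_add, hE.ne', one_mul,
      sub_add_cancel_left]
    exact div_pos_of_neg_of_neg (mul_neg_of_neg_of_pos (by linarith) hΔ) (by linarith)

lemma secantInflow_highPoint_lowPoint_pos (hE : 0 < E)
    (hP : 2 * (1 + E) ^ consumedOrder a b < 2 ^ producedOrder a b) (i : Fin s) :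
    0 < secantInflow a b 1 (highPoint a b) (lowPoint a b E) i := by
  have hΔ : 0 < (2 : ℝ) ^ producedOrder a b - (1 + E) ^ consumedOrder a b := by
    have : 0 < (1 + E) ^ consumedOrder a b := by positivity
    linarith
  unfold secantInflow secantOutflow
  rw [prod_pow_highPoint, prod_pow_lowPoint]
  rcases lt_trichotomy (a i) (b i) with h | h | h
  · have hc : (a i : ℝ) < b i := by exact_mod_cast h
    simp only [highPoint, h, ↓reduceIte, lowPoint, h.not_gt, OfNat.ofNat_ne_one, one_mul, sub_pos]
    nlinarith
  · simp [highPoint, lowPoint, h]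
  · have hc : (b i : ℝ) < a i := by exact_mod_cast h
    simp only [highPoint, h.not_gt, ↓reduceIte, lowPoint, h, left_eq_add, hE.ne', one_mul,
      sub_add_cancel_left, mul_one, sub_pos]
    exact (mul_neg_of_neg_of_pos (by linarith) (by positivity)).trans
      (div_pos_of_neg_of_neg (mul_neg_of_neg_of_pos (by linarith) hΔ) (by linarith))

lemma sum_grad_mul_sub_at_highPoint :
    ∑ j, a j * (∏ m, highPoint a b m ^ a m) / highPoint a b j *
        (highPoint a b j - lowPoint a b E j) =
      2 ^ producedOrder a b * (producedOrder a b / 2 - consumedOrder a b * E) := by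
  have hterm : ∀ j, (a j : ℝ) * 2 ^ producedOrder a b / highPoint a b j *
      (highPoint a b j - lowPoint a b E j) = a j * (if a j < b j then 2 ^ producedOrder a b / 2
        else if b j < a j then -(2 ^ producedOrder a b * E) else 0) := by
    intro j
    unfold highPoint lowPoint
    split_ifs <;> first | (exfalso; omega) | ring
  rw [prod_pow_highPoint]
  simp only [hterm, sum_mul_ite_lt]
  ring

lemma sum_grad_mul_sub_at_lowPoint :
    ∑ j, a j * (∏ m, lowPoint a b E m ^ a m) / lowPoint a b E j *
        (highPoint a b j - lowPoint a b E j) =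
      (1 + E) ^ consumedOrder a b * (producedOrder a b - consumedOrder a b * (E / (1 + E))) := by
  have hterm : ∀ j, (a j : ℝ) * (1 + E) ^ consumedOrder a b / lowPoint a b E j *
      (highPoint a b j - lowPoint a b E j) = a j * (if a j < b j then (1 + E) ^ consumedOrder a b
        else if b j < a j then -((1 + E) ^ consumedOrder a b * (E / (1 + E))) else 0) := by
    intro j
    unfold highPoint lowPoint
    split_ifs <;> first | (exfalso; omega) | ring
  rw [prod_pow_lowPoint]
  simp only [hterm, sum_mul_ite_lt]
  ring

end Witness

theorem irrev_multistationary_nondegenerate_general (s : ℕ) (a b : Fin s → ℕ)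
    (hcond : 1 < ∑ i ∈ Finset.univ.filter (fun i => a i < b i), a i) :
    ∃ (k l : Fin s → ℝ) (κ : ℝ) (x x' : Fin s → ℝ),
      (∀ i, 0 < k i) ∧ (∀ i, 0 < l i) ∧ 0 < κ ∧
      (∀ i, 0 < x i) ∧ (∀ i, 0 < x' i) ∧ x ≠ x' ∧
      (∀ i, irrevSteadyStateMap s a b k l κ x i = 0) ∧
      (∀ i, irrevSteadyStateMap s a b k l κ x' i = 0) ∧
      IsUnit (irrevJacobian s a b k l κ x) ∧
      IsUnit (irrevJacobian s a b k l κ x') := by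
  obtain ⟨E, hE, hsmall, hhigh, hlow⟩ :=
    exists_small_pos_of_two_le (M := producedOrder a b) (N := consumedOrder a b) hcond
  have hP : (1 + E) ^ consumedOrder a b < 2 ^ producedOrder a b := by
    have : 0 < (1 + E) ^ consumedOrder a b := by positivity
    linarith
  have hp : ∏ j, highPoint a b j ^ a j ≠ ∏ j, lowPoint a b E j ^ a j := by
    rw [prod_pow_highPoint, prod_pow_lowPoint]
    exact hP.ne'
  have hxy := eq_of_highPoint_eq_lowPoint (a := a) (b := b) hE
  have hl := secantOutflow_highPoint_lowPoint_pos hE hP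
  have hl' i := (hl i).ne'
  have hsec := secantOutflow_mul_sub (κ := 1) hxy
  refine ⟨_, _, 1, highPoint a b, lowPoint a b E, secantInflow_highPoint_lowPoint_pos hE hsmall,
    hl, one_pos, highPoint_pos, lowPoint_pos hE, highPoint_ne_lowPoint (one_pos.trans hcond),
    irrevSteadyStateMap_secant_left, irrevSteadyStateMap_secant_right hxy,
    isUnit_irrevJacobian_of_secant hl' hsec hp (fun j => (highPoint_pos j).ne') ?_,
    isUnit_irrevJacobian_of_secant hl' hsec hp (fun j => (lowPoint_pos hE j).ne') ?_⟩
  · rw [sum_grad_mul_sub_at_highPoint, prod_pow_highPoint, prod_pow_lowPoint]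
    exact hhigh.ne'
  · rw [sum_grad_mul_sub_at_lowPoint, prod_pow_highPoint, prod_pow_lowPoint]
    exact hlow.ne

/-- If `∑_{i : a_i < b_i} a_i > 1`, then the irreversible one-reaction fully open network
admits multiple positive nondegenerate mass-action steady states. -/
theorem irrev_multistationary_nondegenerate (s : ℕ) (hs : 1 ≤ s) (a b : Fin s → ℕ)
    (hab : a ≠ b) (hcond : 1 < ∑ i ∈ Finset.univ.filter (fun i => a i < b i), a i) :
    ∃ (k l : Fin s → ℝ) (κ : ℝ) (x x' : Fin s → ℝ),
      (∀ i, 0 < k i) ∧ (∀ i, 0 < l i) ∧ 0 < κ ∧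
      (∀ i, 0 < x i) ∧ (∀ i, 0 < x' i) ∧ x ≠ x' ∧
      (∀ i, irrevSteadyStateMap s a b k l κ x i = 0) ∧
      (∀ i, irrevSteadyStateMap s a b k l κ x' i = 0) ∧
      IsUnit (irrevJacobian s a b k l κ x) ∧
      IsUnit (irrevJacobian s a b k l κ x') :=
  irrev_multistationary_nondegenerate_general s a b hcond
end

section
/- Let s ≥ 1 and let a, b : Fin s → ℕ with a ≠ b. The following are equivalent: (i) there exist positive reals k_1,…,k_s, l_1,…,l_s, κ_a, κ_b and two distinct points x, x' in the open positive orthant of ℝ^s such that f(x) = 0 and f(x') = 0, where f_i(z) = k_i − l_i z_i + ((b_i : ℝ) − (a_i : ℝ))(κ_a ∏_j z_j^{a_j} − κ_b ∏_j z_j^{b_j}); (ii) ∑_{i : a_i < b_i} a_i > 1 or ∑_{i : b_i < a_i} b_i > 1. -/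
/-
Solving the `i`-th equation for `x i` shows that every steady state lies on the affine line
`G ↦ (k + (b - a) G) / l`, at a zero of `G ↦ κa x(G)^a - κb x(G)^b - G`; distinct steady states
give distinct zeros.

If both sums are at most `1`, this function has negative derivative at every zero where `x(G)` is
positive: the derivative is `∑ (b i - a i) (a i κa x^a - b i κb x^b) / (l i x i) - 1`, and when
`κa x^a ≥ κb x^b` only the species with `a i < b i` contribute positively, each by less than `a i`
(symmetrically otherwise). A function that crosses zero only downwards has at most one zero.

Conversely, if `∑_{a i < b i} a i ≥ 2`, take two positive points that differ exactly on the species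
with `a i ≠ b i`, in the direction of `b - a`. For fixed points, the two steady-state equations of
each species are linear in `(k i, l i)` and have a positive solution once `κa x^a` grows faster
than linearly between the two points, which the exponent sum `≥ 2` allows. The case
`∑_{b i < a i} b i ≥ 2` follows by exchanging the two complexes.
-/

/-- The mass-action steady-state map of the fully open network
`{0 ⇄ X_i (1 ≤ i ≤ s), ∑ a_i X_i ⇄ ∑ b_i X_i}` with one reversible non-flow reaction. -/
noncomputable def revSteadyStateMap (s : ℕ) (a b : Fin s → ℕ) (k l : Fin s → ℝ)
    (κa κb : ℝ) (z : Fin s → ℝ) (i : Fin s) : ℝ :=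
  k i - l i * z i +
    ((b i : ℝ) - (a i : ℝ)) * (κa * ∏ j, z j ^ (a j) - κb * ∏ j, z j ^ (b j))

open Finset Topology SignType

theorem hasDerivAt_prod_pow {ι : Type*} [Fintype ι] {f : ι → ℝ → ℝ} {f' : ι → ℝ} {x : ℝ}
    (c : ι → ℕ) (hf : ∀ i, HasDerivAt (f i) (f' i) x) (hx : ∀ i, f i x ≠ 0) :
    HasDerivAt (fun y => ∏ i, f i y ^ c i) ((∏ i, f i x ^ c i) * ∑ i, c i * f' i / f i x) x := by
  classical
  refine (HasDerivAt.fun_finsetProd (u := univ) fun i _ => (hf i).fun_pow (c i)).congr_deriv ?_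
  rw [mul_sum]
  refine sum_congr rfl fun i _ => ?_
  rw [← mul_prod_erase univ (fun j => f j x ^ c j) (mem_univ i), smul_eq_mul]
  cases c i with
  | zero => simp
  | succ n =>
    have := hx i
    rw [Nat.add_sub_cancel]
    field_simp
    ring

theorem eq_of_deriv_neg_at_zeros {F : ℝ → ℝ} {u v : ℝ} (huv : u ≤ v)
    (hF : ContinuousOn F (Set.Icc u v)) (hu : F u = 0) (hv : F v = 0)
    (hd : ∀ x ∈ Set.Icc u v, F x = 0 → deriv F x < 0) : u = v := by
  by_contra hne
  have huv : u < v := huv.lt_of_ne hne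
  -- `F > 0` at some `z < v`; just right of the last zero `r ≤ z`, `F < 0`, so `F` vanishes on
  -- `(r, z)`.
  obtain ⟨z, ⟨huz, hzv⟩, hFz⟩ : ∃ z ∈ Set.Ioo u v, 0 < F z := by
    have hsign := eventually_nhdsWithin_sign_eq_of_deriv_neg (hd v ⟨huv.le, le_rfl⟩ hv) hv
    have hnear : ∀ᶠ z in 𝓝[<] v, z ∈ Set.Ioo u v := Ioo_mem_nhdsLT huv
    obtain ⟨z, hz, hzs⟩ := (hnear.and (hsign.filter_mono nhdsWithin_le_nhds)).exists
    exact ⟨z, hz, sign_eq_one_iff.mp (hzs.trans (sign_pos (sub_pos.mpr hz.2)))⟩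
  set S := Set.Icc u z ∩ F ⁻¹' {0}
  have hS : IsCompact S := isCompact_Icc.of_isClosed_subset
    ((hF.mono (Set.Icc_subset_Icc_right hzv.le)).preimage_isClosed_of_isClosed isClosed_Icc
      isClosed_singleton) Set.inter_subset_left
  obtain ⟨⟨hur, hrz⟩, hFr⟩ := hS.sSup_mem ⟨u, ⟨le_rfl, huz.le⟩, hu⟩
  set r := sSup S
  have hrz : r < z := hrz.lt_of_ne fun h => by simp_all
  obtain ⟨w, ⟨hrw, hwz⟩, hFw⟩ : ∃ w ∈ Set.Ioo r z, F w < 0 := by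
    have hsign := eventually_nhdsWithin_sign_eq_of_deriv_neg
      (hd r ⟨hur, hrz.le.trans hzv.le⟩ hFr) hFr
    have hnear : ∀ᶠ w in 𝓝[>] r, w ∈ Set.Ioo r z := Ioo_mem_nhdsGT hrz
    obtain ⟨w, hw, hws⟩ := (hnear.and (hsign.filter_mono nhdsWithin_le_nhds)).exists
    exact ⟨w, hw, sign_eq_neg_one_iff.mp (hws.trans (sign_neg (sub_neg.mpr hw.1)))⟩
  obtain ⟨c, ⟨hwc, hcz⟩, hFc⟩ := intermediate_value_Ioo hwz.le
    (hF.mono (Set.Icc_subset_Icc (by linarith) hzv.le)) ⟨hFw, hFz⟩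
  have : c ≤ r := le_csSup hS.bddAbove ⟨⟨by linarith, hcz.le⟩, hFc⟩
  linarith

theorem exists_pos_mul_eq_of_sign_eq {x y : ℝ} (h : sign x = sign y) : ∃ c > 0, x = c * y := by
  rcases lt_trichotomy y 0 with hy | rfl | hy
  · rw [sign_neg hy, sign_eq_neg_one_iff] at h
    exact ⟨x / y, div_pos_of_neg_of_neg h hy, (div_mul_cancel₀ x hy.ne).symm⟩
  · rw [sign_zero, sign_eq_zero_iff] at h
    exact ⟨1, one_pos, by simp [h]⟩
  · rw [sign_pos hy, sign_eq_one_iff] at h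
    exact ⟨x / y, div_pos h hy, (div_mul_cancel₀ x hy.ne').symm⟩

namespace RevNetwork

theorem sum_lt_one_of_le {ι : Type*} [Fintype ι] {a b : ι → ℕ} {c : ι → ℝ} {A B : ℝ}
    (hc : ∀ i, 0 < c i) (hB : 0 < B) (hBA : B ≤ A)
    (hlt : ∀ i, ((b i : ℝ) - a i) * c i * (A - B) < 1)
    (hP : ∑ i ∈ univ.filter (fun i => a i < b i), a i ≤ 1) :
    ∑ i, ((b i : ℝ) - a i) * c i * (a i * A - b i * B) < 1 := by
  have hup : ∀ i, a i < b i → ((b i : ℝ) - a i) * c i * (a i * A - b i * B) < a i := by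
    intro i hi
    -- the term is `a i * ((b i - a i) * c i * (A - B)) - (b i - a i) ^ 2 * c i * B`
    have hd : (0 : ℝ) < b i - a i := sub_pos.mpr (by exact_mod_cast hi)
    have hdrift : 0 < ((b i : ℝ) - a i) ^ 2 * c i * B := by have := hc i; positivity
    have : (a i : ℝ) * (((b i : ℝ) - a i) * c i * (A - B)) ≤ a i :=
      mul_le_of_le_one_right (Nat.cast_nonneg _) (hlt i).le
    linarith
  have hdown : ∀ i, ¬ a i < b i → ((b i : ℝ) - a i) * c i * (a i * A - b i * B) ≤ 0 := by
    intro i hi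
    have hd : (b i : ℝ) - a i ≤ 0 := sub_nonpos.mpr (by exact_mod_cast not_lt.mp hi)
    have hrate : 0 ≤ (a i : ℝ) * A - b i * B := by nlinarith [Nat.cast_nonneg (α := ℝ) (b i)]
    exact mul_nonpos_of_nonpos_of_nonneg (mul_nonpos_of_nonpos_of_nonneg hd (hc i).le) hrate
  rw [← sum_filter_add_sum_filter_not univ (fun i => a i < b i)]
  have hneg : ∑ i ∈ univ.filter (fun i => ¬ a i < b i),
      ((b i : ℝ) - a i) * c i * (a i * A - b i * B) ≤ 0 :=
    sum_nonpos fun i hi => hdown i (mem_filter.mp hi).2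
  rcases (univ.filter fun i => a i < b i).eq_empty_or_nonempty with hempty | hne
  · rw [hempty, sum_empty]
    linarith
  · have hlt' := sum_lt_sum_of_nonempty hne fun i hi => hup i (mem_filter.mp hi).2
    have hP' : ∑ i ∈ univ.filter (fun i => a i < b i), (a i : ℝ) ≤ 1 := by exact_mod_cast hP
    linarith

theorem sum_lt_one {ι : Type*} [Fintype ι] {a b : ι → ℕ} {c : ι → ℝ} {A B : ℝ}
    (hc : ∀ i, 0 < c i) (hA : 0 < A) (hB : 0 < B)
    (hlt : ∀ i, ((b i : ℝ) - a i) * c i * (A - B) < 1)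
    (hP : ∑ i ∈ univ.filter (fun i => a i < b i), a i ≤ 1)
    (hN : ∑ i ∈ univ.filter (fun i => b i < a i), b i ≤ 1) :
    ∑ i, ((b i : ℝ) - a i) * c i * (a i * A - b i * B) < 1 := by
  rcases le_total B A with hBA | hAB
  · exact sum_lt_one_of_le hc hB hBA hlt hP
  · have hswap := sum_lt_one_of_le (a := b) (b := a) hc hA hAB
      (fun i => by linarith [hlt i]) hN
    convert hswap using 2 with i
    ring

variable {s : ℕ} {a b : Fin s → ℕ} {k l : Fin s → ℝ} {κa κb : ℝ}

noncomputable def netRate (a b : Fin s → ℕ) (κa κb : ℝ) (z : Fin s → ℝ) : ℝ :=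
  κa * ∏ j, z j ^ a j - κb * ∏ j, z j ^ b j

noncomputable def steadyLine (a b : Fin s → ℕ) (k l : Fin s → ℝ) (G : ℝ) (i : Fin s) : ℝ :=
  (k i + ((b i : ℝ) - a i) * G) / l i

noncomputable def reducedMap (a b : Fin s → ℕ) (k l : Fin s → ℝ) (κa κb G : ℝ) : ℝ :=
  netRate a b κa κb (steadyLine a b k l G) - G

def IsMultistationary (a b : Fin s → ℕ) : Prop :=
  ∃ (k l : Fin s → ℝ) (κa κb : ℝ) (x x' : Fin s → ℝ),
    (∀ i, 0 < k i) ∧ (∀ i, 0 < l i) ∧ 0 < κa ∧ 0 < κb ∧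
    (∀ i, 0 < x i) ∧ (∀ i, 0 < x' i) ∧ x ≠ x' ∧
    (∀ i, revSteadyStateMap s a b k l κa κb x i = 0) ∧
    (∀ i, revSteadyStateMap s a b k l κa κb x' i = 0)

theorem eq_steadyLine_of_steadyState {x : Fin s → ℝ} (hl : ∀ i, 0 < l i)
    (hx : ∀ i, revSteadyStateMap s a b k l κa κb x i = 0) :
    x = steadyLine a b k l (netRate a b κa κb x) := by
  funext i
  have hxi := hx i
  have hli := (hl i).ne'
  unfold revSteadyStateMap at hxi
  unfold steadyLine netRate
  field_simp
  linarith

theorem reducedMap_netRate_eq_zero {x : Fin s → ℝ} (hl : ∀ i, 0 < l i)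
    (hx : ∀ i, revSteadyStateMap s a b k l κa κb x i = 0) :
    reducedMap a b k l κa κb (netRate a b κa κb x) = 0 := by
  rw [reducedMap, ← eq_steadyLine_of_steadyState hl hx, sub_self]

theorem continuous_reducedMap : Continuous (reducedMap a b k l κa κb) := by
  unfold reducedMap netRate steadyLine
  fun_prop

theorem steadyLine_pos_of_mem_Icc {u v r : ℝ} (hr : r ∈ Set.Icc u v) (hl : ∀ i, 0 < l i)
    (hu : ∀ i, 0 < steadyLine a b k l u i) (hv : ∀ i, 0 < steadyLine a b k l v i) (i : Fin s) :
    0 < steadyLine a b k l r i := by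
  have hui := hu i
  have hvi := hv i
  simp only [steadyLine, div_pos_iff_of_pos_right (hl i)] at hui hvi ⊢
  rcases le_total 0 ((b i : ℝ) - a i) with hd | hd
  · nlinarith [mul_le_mul_of_nonneg_left hr.1 hd]
  · nlinarith [mul_le_mul_of_nonpos_left hr.2 hd]

theorem hasDerivAt_reducedMap {r : ℝ} (hl : ∀ i, 0 < l i)
    (hz : ∀ i, steadyLine a b k l r i ≠ 0) :
    HasDerivAt (reducedMap a b k l κa κb)
      (∑ i, ((b i : ℝ) - a i) * (l i * steadyLine a b k l r i)⁻¹ *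
        (a i * (κa * ∏ j, steadyLine a b k l r j ^ a j) -
          b i * (κb * ∏ j, steadyLine a b k l r j ^ b j)) - 1) r := by
  have hline : ∀ i, HasDerivAt (fun G => steadyLine a b k l G i) (((b i : ℝ) - a i) / l i) r :=
    fun i => by
      unfold steadyLine
      simpa using (((hasDerivAt_id r).const_mul ((b i : ℝ) - a i)).const_add (k i)).div_const
        (l i)
  have hA := (hasDerivAt_prod_pow a hline hz).const_mul κa
  have hB := (hasDerivAt_prod_pow b hline hz).const_mul κb
  refine ((hA.sub hB).sub (hasDerivAt_id r)).congr_deriv ?_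
  simp only [mul_sum, ← sum_sub_distrib]
  congr 1
  refine sum_congr rfl fun i _ => ?_
  have := hz i
  have := (hl i).ne'
  field_simp

theorem deriv_reducedMap_neg {r : ℝ} (hP : ∑ i ∈ univ.filter (fun i => a i < b i), a i ≤ 1)
    (hN : ∑ i ∈ univ.filter (fun i => b i < a i), b i ≤ 1) (hk : ∀ i, 0 < k i)
    (hl : ∀ i, 0 < l i) (hκa : 0 < κa) (hκb : 0 < κb) (hz : ∀ i, 0 < steadyLine a b k l r i)
    (hr : reducedMap a b k l κa κb r = 0) :
    deriv (reducedMap a b k l κa κb) r < 0 := by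
  rw [(hasDerivAt_reducedMap hl fun i => (hz i).ne').deriv, sub_neg]
  refine sum_lt_one (fun i => inv_pos.mpr (mul_pos (hl i) (hz i)))
    (mul_pos hκa (prod_pos fun j _ => pow_pos (hz j) _))
    (mul_pos hκb (prod_pos fun j _ => pow_pos (hz j) _)) (fun i => ?_) hP hN
  have hrate : κa * ∏ j, steadyLine a b k l r j ^ a j -
      κb * ∏ j, steadyLine a b k l r j ^ b j = r := by
    rw [reducedMap, netRate, sub_eq_zero] at hr
    exact hr
  have hflux : l i * steadyLine a b k l r i = k i + ((b i : ℝ) - a i) * r := by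
    rw [steadyLine, mul_div_cancel₀ _ (hl i).ne']
  rw [hrate, mul_comm _ (l i * _)⁻¹, mul_assoc, inv_mul_lt_one₀ (mul_pos (hl i) (hz i)), hflux]
  linarith [hk i]

theorem eq_of_steadyState {x x' : Fin s → ℝ}
    (hP : ∑ i ∈ univ.filter (fun i => a i < b i), a i ≤ 1)
    (hN : ∑ i ∈ univ.filter (fun i => b i < a i), b i ≤ 1) (hk : ∀ i, 0 < k i)
    (hl : ∀ i, 0 < l i) (hκa : 0 < κa) (hκb : 0 < κb) (hx : ∀ i, 0 < x i) (hx' : ∀ i, 0 < x' i)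
    (hfx : ∀ i, revSteadyStateMap s a b k l κa κb x i = 0)
    (hfx' : ∀ i, revSteadyStateMap s a b k l κa κb x' i = 0) : x = x' := by
  have hxl := eq_steadyLine_of_steadyState hl hfx
  have hx'l := eq_steadyLine_of_steadyState hl hfx'
  suffices netRate a b κa κb x = netRate a b κa κb x' by rw [hxl, hx'l, this]
  wlog hle : netRate a b κa κb x' ≤ netRate a b κa κb x generalizing x x'
  · exact (this hx' hx hfx' hfx hx'l hxl (le_of_not_ge hle)).symm
  refine (eq_of_deriv_neg_at_zeros hle continuous_reducedMap.continuousOn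
    (reducedMap_netRate_eq_zero hl hfx') (reducedMap_netRate_eq_zero hl hfx)
    fun r hr hr0 => deriv_reducedMap_neg hP hN hk hl hκa hκb ?_ hr0).symm
  exact steadyLine_pos_of_mem_Icc hr hl (by rwa [← hx'l]) (by rwa [← hxl])

theorem exists_flow_rates {d u u' G G' : ℝ} (hdir : sign (u - u') = sign d) (hG : G' < G)
    (hcross : G' * u < G * u') :
    ∃ k l : ℝ, 0 < k ∧ 0 < l ∧ k - l * u + d * G = 0 ∧ k - l * u' + d * G' = 0 := by
  obtain ⟨c, hc, hcd⟩ := exists_pos_mul_eq_of_sign_eq hdir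
  have hlc : (G - G') / c * c = G - G' := div_mul_cancel₀ _ hc.ne'
  have hkc : ((G - G') / c * u' - d * G') * c = G * u' - G' * u := by
    linear_combination u' * hlc + G' * hcd
  refine ⟨(G - G') / c * u' - d * G', (G - G') / c,
    pos_of_mul_pos_left (hkc ▸ sub_pos.mpr hcross) hc.le, div_pos (sub_pos.mpr hG) hc, ?_, by ring⟩
  linear_combination (-(G - G') / c) * hcd - d * hlc

theorem isMultistationary_of_two_points {x x' : Fin s → ℝ} (hκa : 0 < κa) (hκb : 0 < κb)
    (hx : ∀ i, 0 < x i) (hx' : ∀ i, 0 < x' i) (hne : x ≠ x')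
    (hG : netRate a b κa κb x' < netRate a b κa κb x)
    (hdir : ∀ i, sign (x i - x' i) = sign ((b i : ℝ) - a i))
    (hcross : ∀ i, netRate a b κa κb x' * x i < netRate a b κa κb x * x' i) :
    IsMultistationary a b := by
  choose k l hk hl hfx hfx' using fun i => exists_flow_rates (hdir i) hG (hcross i)
  exact ⟨k, l, κa, κb, x, x', hk, hl, hκa, hκb, hx, hx', hne, hfx, hfx'⟩

theorem isMultistationary_of_one_lt (hm : 1 < ∑ i ∈ univ.filter (fun i => a i < b i), a i) :
    IsMultistationary a b := by
  set m := ∑ i ∈ univ.filter (fun i => a i < b i), a i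
  set x' : Fin s → ℝ := fun i => if b i < a i then 2 else 1
  have hx' : ∀ i, 0 < x' i := fun i => by dsimp only [x']; split_ifs <;> norm_num
  set A' := ∏ j, x' j ^ a j
  have hA' : 0 < A' := prod_pos fun j _ => pow_pos (hx' j) _
  set t := A' + 1
  set x : Fin s → ℝ := fun i => if a i < b i then t else 1
  have hx : ∀ i, 0 < x i := fun i => by dsimp only [x]; split_ifs <;> positivity
  have hxa : ∏ j, x j ^ a j = t ^ m := by
    simp only [x, ite_pow, one_pow, ← prod_filter, prod_pow_eq_pow_sum, m]
  set B' := ∏ j, x' j ^ b j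
  set B := ∏ j, x j ^ b j
  have hB' : 0 < B' := prod_pos fun j _ => pow_pos (hx' j) _
  have hB : 0 < B := prod_pos fun j _ => pow_pos (hx j) _
  set κb := (2 * (B' + B))⁻¹
  have hκb : 0 < κb := by positivity
  have hκbB' : κb * B' < 1 / 2 := by
    rw [inv_mul_lt_iff₀ (by positivity)]
    linarith
  have hκbB : κb * B < 1 / 2 := by
    rw [inv_mul_lt_iff₀ (by positivity)]
    linarith
  have hG' : netRate a b A'⁻¹ κb x' = 1 - κb * B' := by
    rw [netRate, inv_mul_cancel₀ hA'.ne']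
  -- This is where `2 ≤ m` enters: `κa ∏ x^a = t ^ m / A'` must outgrow `t`.
  have hG : t < netRate a b A'⁻¹ κb x := by
    have htm : t ^ 2 ≤ t ^ m := pow_le_pow_right₀ (by linarith) hm
    have hsq : t ^ 2 * A'⁻¹ = t + (1 + A'⁻¹) := by field_simp; ring
    have : t ^ 2 * A'⁻¹ ≤ t ^ m * A'⁻¹ := mul_le_mul_of_nonneg_right htm (by positivity)
    rw [netRate, hxa, mul_comm A'⁻¹]
    have : 0 < A'⁻¹ := by positivity
    linarith
  have hG'pos : 0 < netRate a b A'⁻¹ κb x' := by rw [hG']; linarith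
  have htG' : t * netRate a b A'⁻¹ κb x' < netRate a b A'⁻¹ κb x := by
    have : 0 < t * (κb * B') := by positivity
    rw [hG']
    linarith
  obtain ⟨i₀, hi₀⟩ : (univ.filter fun i => a i < b i).Nonempty :=
    nonempty_of_sum_ne_zero (show m ≠ 0 by omega)
  have hi₀ := (mem_filter.mp hi₀).2
  refine isMultistationary_of_two_points (inv_pos.mpr hA') hκb hx hx' (fun h => ?_) ?_
    (fun i => ?_) (fun i => ?_)
  · have := congrFun h i₀
    simp only [x, x', if_pos hi₀, if_neg hi₀.not_gt] at this
    linarith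
  · nlinarith
  · rcases lt_trichotomy (a i) (b i) with h | h | h
    · have : (a i : ℝ) < b i := by exact_mod_cast h
      simp only [x, x', if_pos h, if_neg h.not_gt]
      rw [sign_pos (by linarith), sign_pos (by linarith)]
    · simp [x, x', h]
    · have : (b i : ℝ) < a i := by exact_mod_cast h
      simp only [x, x', if_pos h, if_neg h.not_gt]
      rw [sign_neg (by linarith), sign_neg (by linarith)]
  · simp only [x, x']
    split_ifs <;> nlinarith

theorem revSteadyStateMap_swap (k l : Fin s → ℝ) (κa κb : ℝ) (z : Fin s → ℝ) :
    revSteadyStateMap s b a k l κb κa z = revSteadyStateMap s a b k l κa κb z := by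
  funext i
  unfold revSteadyStateMap
  ring

theorem IsMultistationary.swap (h : IsMultistationary a b) : IsMultistationary b a := by
  obtain ⟨k, l, κa, κb, x, x', hk, hl, hκa, hκb, hx, hx', hne, hfx, hfx'⟩ := h
  refine ⟨k, l, κb, κa, x, x', hk, hl, hκb, hκa, hx, hx', hne, ?_, ?_⟩ <;>
    rwa [revSteadyStateMap_swap]

end RevNetwork

open RevNetwork

theorem rev_multistationary_iff_general (s : ℕ) (a b : Fin s → ℕ) :
    (∃ (k l : Fin s → ℝ) (κa κb : ℝ) (x x' : Fin s → ℝ),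
      (∀ i, 0 < k i) ∧ (∀ i, 0 < l i) ∧ 0 < κa ∧ 0 < κb ∧
      (∀ i, 0 < x i) ∧ (∀ i, 0 < x' i) ∧ x ≠ x' ∧
      (∀ i, revSteadyStateMap s a b k l κa κb x i = 0) ∧
      (∀ i, revSteadyStateMap s a b k l κa κb x' i = 0)) ↔
    (1 < ∑ i ∈ Finset.univ.filter (fun i => a i < b i), a i ∨
      1 < ∑ i ∈ Finset.univ.filter (fun i => b i < a i), b i) := by
  change IsMultistationary a b ↔ _
  constructor
  · rintro ⟨k, l, κa, κb, x, x', hk, hl, hκa, hκb, hx, hx', hne, hfx, hfx'⟩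
    by_contra! h
    exact hne (eq_of_steadyState h.1 h.2 hk hl hκa hκb hx hx' hfx hfx')
  · rintro (h | h)
    · exact isMultistationary_of_one_lt h
    · exact (isMultistationary_of_one_lt h).swap

/-- A one-reaction fully open network with one reversible non-flow reaction
`∑ a_i X_i ⇄ ∑ b_i X_i` admits multiple positive mass-action steady states if and only if
`∑_{i : a_i < b_i} a_i > 1` or `∑_{i : b_i < a_i} b_i > 1`. -/
theorem rev_multistationary_iff (s : ℕ) (hs : 1 ≤ s) (a b : Fin s → ℕ) (hab : a ≠ b) :
    (∃ (k l : Fin s → ℝ) (κa κb : ℝ) (x x' : Fin s → ℝ),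
      (∀ i, 0 < k i) ∧ (∀ i, 0 < l i) ∧ 0 < κa ∧ 0 < κb ∧
      (∀ i, 0 < x i) ∧ (∀ i, 0 < x' i) ∧ x ≠ x' ∧
      (∀ i, revSteadyStateMap s a b k l κa κb x i = 0) ∧
      (∀ i, revSteadyStateMap s a b k l κa κb x' i = 0)) ↔
    (1 < ∑ i ∈ Finset.univ.filter (fun i => a i < b i), a i ∨
      1 < ∑ i ∈ Finset.univ.filter (fun i => b i < a i), b i) :=
  rev_multistationary_iff_general s a b
end

section
/- Let a₁, a₂ be natural numbers with a₂ > a₁ > 1, let k_X, l_X > 0, and suppose 0 < k < k* where k* = (1/(a₂ − a₁)) · (l_X/a₁)^{a₁} · ((a₁ − 1)/k_X)^{a₁ − 1}. Then the function f(x) = k_X − l_X x + k(a₂ − a₁)x^{a₁} has exactly two zeros in (0, ∞), and f'(x) ≠ 0 at each of these zeros. -/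
/-!
The steady-state function is strictly convex on `[0, ∞)`, positive at `0` and tends to `∞`.
The condition `k < k*` says exactly that it is negative at `x₀ = a₁ k_X / ((a₁ - 1) l_X)`, its
double zero when `k = k*`. So it has one zero on each side of `x₀` and, by strict convexity, no
third one; at the two zeros the derivative is strictly below, resp. above, the secant slope `0`.
-/

open Set Filter

theorem StrictConvexOn.const_mul {E : Type*} [AddCommGroup E] [Module ℝ E] {s : Set E}
    {f : E → ℝ} {c : ℝ} (hc : 0 < c) (hf : StrictConvexOn ℝ s f) :
    StrictConvexOn ℝ s fun x => c * f x :=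
  ⟨hf.1, fun _ hx _ hy hxy _ _ ha hb hab => by
    simpa only [smul_eq_mul, mul_left_comm _ c, ← mul_add] using
      mul_lt_mul_of_pos_left (hf.2 hx hy hxy ha hb hab) hc⟩

theorem StrictConvexOn.lt_max_of_mem_Ioo {s : Set ℝ} {f : ℝ → ℝ} (hf : StrictConvexOn ℝ s f)
    {x y z : ℝ} (hx : x ∈ s) (hz : z ∈ s) (hy : y ∈ Ioo x z) : f y < max (f x) (f z) :=
  hf.lt_on_openSegment hx hz (hy.1.trans hy.2).ne (by rwa [openSegment_eq_Ioo (hy.1.trans hy.2)])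

theorem StrictConvexOn.eq_or_eq_of_apply_eq {s : Set ℝ} {f : ℝ → ℝ} (hf : StrictConvexOn ℝ s f)
    {x x₁ x₂ : ℝ} (hx : x ∈ s) (hx₁ : x₁ ∈ s) (hx₂ : x₂ ∈ s) (h₁₂ : x₁ < x₂)
    (hf₁₂ : f x₁ = f x₂) (hfx : f x = f x₁) : x = x₁ ∨ x = x₂ := by
  by_contra! hne
  rcases lt_or_gt_of_ne hne.1 with hlt₁ | hgt₁
  · have := hf.lt_max_of_mem_Ioo hx hx₂ ⟨hlt₁, h₁₂⟩
    simp_all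
  rcases lt_or_gt_of_ne hne.2 with hlt₂ | hgt₂
  · have := hf.lt_max_of_mem_Ioo hx₁ hx₂ ⟨hgt₁, hlt₂⟩
    simp_all
  · have := hf.lt_max_of_mem_Ioo hx₁ hx ⟨h₁₂, hgt₂⟩
    simp_all

theorem StrictConvexOn.deriv_neg_and_deriv_pos_of_apply_eq {s : Set ℝ} {f : ℝ → ℝ}
    (hf : StrictConvexOn ℝ s f) {x₁ x₂ : ℝ} (hx₁ : x₁ ∈ s) (hx₂ : x₂ ∈ s) (h₁₂ : x₁ < x₂)
    (hf₁₂ : f x₁ = f x₂) (hd₁ : DifferentiableAt ℝ f x₁) (hd₂ : DifferentiableAt ℝ f x₂) :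
    deriv f x₁ < 0 ∧ 0 < deriv f x₂ := by
  have hslope : slope f x₁ x₂ = 0 := by simp [slope_def_field, hf₁₂]
  exact ⟨hslope ▸ hf.deriv_lt_slope hx₁ hx₂ h₁₂ hd₁, hslope ▸ hf.slope_lt_deriv hx₁ hx₂ h₁₂ hd₂⟩

/-- With `b = k_X`, `l = l_X`, `c = k (a₂ - a₁)` and `n = a₁` this is the function `f`. -/
def steadyState (b l c : ℝ) (n : ℕ) (x : ℝ) : ℝ := b - l * x + c * x ^ n

section SteadyState

variable {b l c : ℝ} {n : ℕ}

theorem strictConvexOn_steadyState (hc : 0 < c) (hn : 2 ≤ n) :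
    StrictConvexOn ℝ (Ici 0) (steadyState b l c n) := by
  refine ⟨convex_Ici 0, fun x hx y hy hxy p q hp hq hpq => ?_⟩
  have h := ((strictConvexOn_pow hn).const_mul hc).2 hx hy hxy hp hq hpq
  simp only [steadyState, smul_eq_mul] at h ⊢
  linear_combination h - b * hpq

theorem tendsto_steadyState_atTop (hc : 0 < c) (hn : 2 ≤ n) :
    Tendsto (steadyState b l c n) atTop atTop := by
  have h : Tendsto (fun x : ℝ => x * (c * x ^ (n - 1) - l)) atTop atTop :=
    tendsto_id.atTop_mul_atTop₀ <| tendsto_atTop_add_const_right _ (-l) <|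
      (tendsto_pow_atTop (by omega)).const_mul_atTop hc
  refine tendsto_atTop_add_const_left _ b h |>.congr fun x => ?_
  obtain ⟨m, rfl⟩ : ∃ m, n = m + 1 := ⟨n - 1, by omega⟩
  simp only [steadyState, add_tsub_cancel_right, pow_succ]
  ring

theorem steadyState_neg_of_lt (hn : 1 < n) (hb : 0 < b) (hl : 0 < l)
    (hc : c < (l / n) ^ n * ((n - 1) / b) ^ (n - 1)) :
    steadyState b l c n (n * b / ((n - 1) * l)) < 0 := by
  obtain ⟨m, rfl⟩ : ∃ m, n = m + 1 := ⟨n - 1, by omega⟩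
  have hm : (0 : ℝ) < m := by exact_mod_cast Nat.lt_of_succ_lt_succ hn
  push_cast at hc ⊢
  simp only [steadyState, add_sub_cancel_right] at hc ⊢
  set x₀ := (m + 1) * b / (m * l) with hx₀def
  have hx₀ : 0 < x₀ := by positivity
  have hcrit : (l / (m + 1)) ^ (m + 1) * (m / b) ^ m * x₀ ^ (m + 1) = b / m := by
    rw [mul_right_comm, ← mul_pow, show l / (m + 1) * x₀ = b / m by rw [hx₀def]; field_simp,
      pow_succ, mul_right_comm, ← mul_pow, div_mul_div_cancel₀', div_self hm.ne', one_pow, one_mul]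
    exact hb.ne'
  have := mul_lt_mul_of_pos_right hc (pow_pos hx₀ (m + 1))
  rw [hcrit] at this
  have hlx : l * x₀ = b + b / m := by rw [hx₀def]; field_simp
  linarith

end SteadyState

/-- For `0 < k < k*`, the steady-state function `f(x) = k_X - l_X x + k(a₂ - a₁)x^{a₁}` of
the fully open network `0 ⇄ X, a₁X → a₂X` has exactly two zeros in `(0, ∞)`, and both are
nondegenerate (`f' ≠ 0` there). -/
theorem two_nondegenerate_steady_states_of_lt_kstar (a₁ a₂ : ℕ) (h1 : 1 < a₁) (h2 : a₁ < a₂)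
    (kX lX k : ℝ) (hkX : 0 < kX) (hlX : 0 < lX) (hk : 0 < k)
    (hklt : k < (1 / ((a₂ : ℝ) - (a₁ : ℝ))) * (lX / (a₁ : ℝ)) ^ a₁ *
      (((a₁ : ℝ) - 1) / kX) ^ (a₁ - 1)) :
    ∃ x₁ x₂ : ℝ, 0 < x₁ ∧ 0 < x₂ ∧ x₁ ≠ x₂ ∧
      (kX - lX * x₁ + k * ((a₂ : ℝ) - (a₁ : ℝ)) * x₁ ^ a₁ = 0) ∧
      (kX - lX * x₂ + k * ((a₂ : ℝ) - (a₁ : ℝ)) * x₂ ^ a₁ = 0) ∧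
      (∀ x : ℝ, 0 < x → kX - lX * x + k * ((a₂ : ℝ) - (a₁ : ℝ)) * x ^ a₁ = 0 →
        x = x₁ ∨ x = x₂) ∧
      deriv (fun x : ℝ => kX - lX * x + k * ((a₂ : ℝ) - (a₁ : ℝ)) * x ^ a₁) x₁ ≠ 0 ∧
      deriv (fun x : ℝ => kX - lX * x + k * ((a₂ : ℝ) - (a₁ : ℝ)) * x ^ a₁) x₂ ≠ 0 := by
  set c := k * ((a₂ : ℝ) - (a₁ : ℝ))
  have hd : (0 : ℝ) < a₂ - a₁ := sub_pos.2 (by exact_mod_cast h2)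
  have hc : 0 < c := mul_pos hk hd
  have hc_lt : c < (lX / a₁) ^ a₁ * ((a₁ - 1) / kX) ^ (a₁ - 1) :=
    calc c < 1 / ((a₂ : ℝ) - a₁) * (lX / a₁) ^ a₁ * ((a₁ - 1) / kX) ^ (a₁ - 1) * (a₂ - a₁) :=
          mul_lt_mul_of_pos_right hklt hd
      _ = (lX / a₁) ^ a₁ * ((a₁ - 1) / kX) ^ (a₁ - 1) := by field_simp
  set f := steadyState kX lX c a₁
  have hconv : StrictConvexOn ℝ (Ici 0) f := strictConvexOn_steadyState hc h1
  have hdiff : Differentiable ℝ f := by unfold f steadyState; fun_prop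
  have hcont : Continuous f := hdiff.continuous
  set x₀ : ℝ := a₁ * kX / ((a₁ - 1) * lX)
  have hx₀ : 0 < x₀ := div_pos (by positivity) (mul_pos (by simpa using h1) hlX)
  have hfx₀ : f x₀ < 0 := steadyState_neg_of_lt h1 hkX hlX hc_lt
  obtain ⟨M, hfM, hM⟩ := (((tendsto_steadyState_atTop hc h1).eventually_gt_atTop 0).and
    (eventually_gt_atTop x₀)).exists
  obtain ⟨x₁, ⟨hx₁, hx₁x₀⟩, hfx₁⟩ := intermediate_value_Ioo' hx₀.le hcont.continuousOn
    ⟨hfx₀, by simpa [f, steadyState, zero_pow (by omega : a₁ ≠ 0)] using hkX⟩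
  obtain ⟨x₂, ⟨hx₀x₂, -⟩, hfx₂⟩ := intermediate_value_Ioo hM.le hcont.continuousOn ⟨hfx₀, hfM⟩
  have hx₁x₂ : x₁ < x₂ := hx₁x₀.trans hx₀x₂
  have hx₂ : 0 < x₂ := hx₀.trans hx₀x₂
  obtain ⟨hderiv₁, hderiv₂⟩ := hconv.deriv_neg_and_deriv_pos_of_apply_eq hx₁.le hx₂.le hx₁x₂
    (hfx₁.trans hfx₂.symm) (hdiff x₁) (hdiff x₂)
  exact ⟨x₁, x₂, hx₁, hx₂, hx₁x₂.ne, hfx₁, hfx₂, fun x hx hfx => hconv.eq_or_eq_of_apply_eq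
    hx.le hx₁.le hx₂.le hx₁x₂ (hfx₁.trans hfx₂.symm) (hfx.trans hfx₁.symm), hderiv₁.ne, hderiv₂.ne'⟩
end

section
/- Let a₁, a₂ be natural numbers with a₂ > a₁ > 1, let k_X, l_X > 0, and suppose k = k* where k* = (1/(a₂ − a₁)) · (l_X/a₁)^{a₁} · ((a₁ − 1)/k_X)^{a₁ − 1}. Then x* := (l_X/(k a₁(a₂ − a₁)))^{1/(a₁ − 1)} is the unique zero of f(x) = k_X − l_X x + k(a₂ − a₁)x^{a₁} in (0, ∞), and moreover f(x*) = 0 and f'(x*) = 0 (so x* is a root of multiplicity at least two). -/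
/-!
For `a₁ ≥ 2` the rate `f(x) = k_X - l_X x + b x^{a₁}`, `b = k(a₂ - a₁) > 0`, is strictly convex
on `[0, ∞)`, and `x*` is its critical point: `b a₁ x*^{a₁-1} = l_X`. The condition `k = k*` says
exactly that `x* = a₁ k_X / ((a₁ - 1) l_X)`, and then `f(x*) = k_X - l_X x* (a₁ - 1)/a₁ = 0`.
A strictly convex function with a critical point in the interior attains there its strict
minimum, so `x*` is its only zero on `[0, ∞)`.
-/

open Set

theorem StrictConvexOn.eq_of_hasDerivAt_eq_zero {S : Set ℝ} {f : ℝ → ℝ} {x₀ y : ℝ}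
    (hf : StrictConvexOn ℝ S f) (hx₀ : x₀ ∈ interior S) (hf' : HasDerivAt f 0 x₀) (hy : y ∈ S)
    (hfy : f y = f x₀) : y = x₀ := by
  have hmin : IsMinOn f S x₀ := hf.convexOn.isMinOn_of_rightDeriv_eq_zero hx₀
    (hf'.hasDerivWithinAt.derivWithin (uniqueDiffWithinAt_Ioi x₀))
  exact hf.eq_of_isMinOn (fun z hz => hfy.trans_le (hmin hz)) hmin hy (interior_subset hx₀)

def steadyStateRate (c l b : ℝ) (n : ℕ) (x : ℝ) : ℝ := c - l * x + b * x ^ n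

namespace steadyStateRate

theorem hasDerivAt (c l b : ℝ) (n : ℕ) (x : ℝ) :
    HasDerivAt (steadyStateRate c l b n) (b * n * x ^ (n - 1) - l) x := by
  refine ((((hasDerivAt_id x).const_mul l).const_sub c).add
    ((hasDerivAt_pow n x).const_mul b)).congr_deriv ?_
  ring

theorem strictConvexOn (c l : ℝ) {b : ℝ} {n : ℕ} (hb : 0 < b) (hn : 2 ≤ n) :
    StrictConvexOn ℝ (Ici 0) (steadyStateRate c l b n) := by
  refine StrictMonoOn.strictConvexOn_of_deriv (convex_Ici 0)
    (by unfold steadyStateRate; fun_prop) ?_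
  rw [interior_Ici, deriv_eq (hasDerivAt c l b n)]
  intro x hx y _ hxy
  have : n - 1 ≠ 0 := by omega
  dsimp only
  gcongr
  exact hx.le

theorem eq_zero_of_mul_pow_pred_eq {c l b t : ℝ} {n : ℕ} (hn : n ≠ 0)
    (hcrit : b * n * t ^ (n - 1) = l) (ht : (n - 1) * l * t = n * c) :
    steadyStateRate c l b n t = 0 := by
  have hn' : (n : ℝ) ≠ 0 := by positivity
  apply mul_left_cancel₀ hn'
  obtain ⟨m, rfl⟩ : ∃ m, n = m + 1 := ⟨n - 1, by omega⟩
  simp only [steadyStateRate, Nat.add_sub_cancel, pow_succ] at hcrit ⊢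
  push_cast at *
  linear_combination t * hcrit - ht

end steadyStateRate

theorem rpow_one_div_sub_one_of_mul_pow_pred_eq {b l t : ℝ} {n : ℕ} (hb : 0 < b) (hn : 2 ≤ n)
    (ht : 0 ≤ t) (hcrit : b * n * t ^ (n - 1) = l) :
    (l / (b * n)) ^ (1 / ((n : ℝ) - 1)) = t := by
  have hbn : b * n ≠ 0 := by positivity
  rw [← hcrit, mul_div_cancel_left₀ _ hbn, one_div, ← Nat.cast_pred (by omega)]
  exact Real.pow_rpow_inv_natCast ht (by omega)

noncomputable def kstar (n : ℕ) (d kX lX : ℝ) : ℝ := (1 / d) * (lX / n) ^ n * ((n - 1) / kX) ^ (n - 1)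

theorem mul_pow_pred_eq_of_eq_kstar {n : ℕ} (hn : 1 < n) {d kX lX k : ℝ} (hd : d ≠ 0)
    (hkX : kX ≠ 0) (hlX : lX ≠ 0) (hk : k = kstar n d kX lX) :
    k * d * n * (n * kX / ((n - 1) * lX)) ^ (n - 1) = lX := by
  obtain ⟨m, rfl⟩ : ∃ m, n = m + 1 := ⟨n - 1, by omega⟩
  have hm : (m : ℝ) ≠ 0 := by exact_mod_cast (show m ≠ 0 by omega)
  subst hk
  push_cast [kstar]
  simp only [add_sub_cancel_right, div_pow, mul_pow, pow_succ]
  field_simp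

/-- For `k = k*`, the steady-state function `f(x) = k_X - l_X x + k(a₂ - a₁)x^{a₁}` of the
fully open network `0 ⇄ X, a₁X → a₂X` has the unique positive zero
`x* = (l_X/(k a₁(a₂ - a₁)))^{1/(a₁-1)}`, which is moreover a root of `f` of multiplicity
at least two: `f(x*) = 0` and `f'(x*) = 0`. -/
theorem unique_degenerate_steady_state_of_eq_kstar (a₁ a₂ : ℕ) (h1 : 1 < a₁) (h2 : a₁ < a₂)
    (kX lX k : ℝ) (hkX : 0 < kX) (hlX : 0 < lX) (hk : 0 < k)
    (hkeq : k = (1 / ((a₂ : ℝ) - (a₁ : ℝ))) * (lX / (a₁ : ℝ)) ^ a₁ *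
      (((a₁ : ℝ) - 1) / kX) ^ (a₁ - 1)) :
    (kX - lX * (lX / (k * (a₁ : ℝ) * ((a₂ : ℝ) - (a₁ : ℝ)))) ^ ((1 : ℝ) / ((a₁ : ℝ) - 1)) +
      k * ((a₂ : ℝ) - (a₁ : ℝ)) *
        ((lX / (k * (a₁ : ℝ) * ((a₂ : ℝ) - (a₁ : ℝ)))) ^ ((1 : ℝ) / ((a₁ : ℝ) - 1))) ^ a₁
      = 0) ∧
    deriv (fun x : ℝ => kX - lX * x + k * ((a₂ : ℝ) - (a₁ : ℝ)) * x ^ a₁)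
      ((lX / (k * (a₁ : ℝ) * ((a₂ : ℝ) - (a₁ : ℝ)))) ^ ((1 : ℝ) / ((a₁ : ℝ) - 1))) = 0 ∧
    (∀ x : ℝ, 0 < x → kX - lX * x + k * ((a₂ : ℝ) - (a₁ : ℝ)) * x ^ a₁ = 0 →
      x = (lX / (k * (a₁ : ℝ) * ((a₂ : ℝ) - (a₁ : ℝ)))) ^ ((1 : ℝ) / ((a₁ : ℝ) - 1))) := by
  have hd : (0 : ℝ) < a₂ - a₁ := sub_pos.mpr (by exact_mod_cast h2)
  have ha₁ : (0 : ℝ) < a₁ - 1 := sub_pos.mpr (by exact_mod_cast h1)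
  set b := k * ((a₂ : ℝ) - a₁)
  set t := a₁ * kX / ((a₁ - 1) * lX)
  have hb : 0 < b := mul_pos hk hd
  have ht : 0 < t := div_pos (by positivity) (mul_pos ha₁ hlX)
  have hcrit : b * a₁ * t ^ (a₁ - 1) = lX :=
    mul_pow_pred_eq_of_eq_kstar h1 hd.ne' hkX.ne' hlX.ne' hkeq
  have hxstar : (lX / (k * a₁ * (a₂ - a₁))) ^ (1 / ((a₁ : ℝ) - 1)) = t := by
    rw [mul_right_comm]
    exact rpow_one_div_sub_one_of_mul_pow_pred_eq hb h1 ht.le hcrit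
  have hderiv : HasDerivAt (steadyStateRate kX lX b a₁) 0 t := by
    simpa [hcrit] using steadyStateRate.hasDerivAt kX lX b a₁ t
  have hroot : steadyStateRate kX lX b a₁ t = 0 :=
    steadyStateRate.eq_zero_of_mul_pow_pred_eq (by omega) hcrit <|
      mul_div_cancel₀ _ (mul_pos ha₁ hlX).ne'
  rw [hxstar]
  refine ⟨hroot, hderiv.deriv, fun x hx hfx => ?_⟩
  exact (steadyStateRate.strictConvexOn kX lX hb h1).eq_of_hasDerivAt_eq_zero
    (by simpa using ht) hderiv hx.le (hfx.trans hroot.symm)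
end

section
/- Let a₁, a₂ be natural numbers with a₂ > a₁ > 1, let k_X, l_X > 0, and suppose k > k* where k* = (1/(a₂ − a₁)) · (l_X/a₁)^{a₁} · ((a₁ − 1)/k_X)^{a₁ − 1}. Then f(x) = k_X − l_X x + k(a₂ − a₁)x^{a₁} satisfies f(x) > 0 for all x > 0; in particular f has no zeros in (0, ∞). -/
/-!
Write `n = a₁`. The critical coefficient `c* = (l_X/n)^n ((n-1)/k_X)^(n-1) = k*(a₂ - a₁)` is
the one for which `k_X - l_X x + c* x^n` has a double root at `x₀ = n k_X / ((n-1) l_X)`: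
in the variable `t = x / x₀` it becomes `k_X/(n-1) · (t^n - 1 - n(t - 1))`, which is
nonnegative by Bernoulli's inequality. A larger coefficient `k(a₂ - a₁) > c*` then makes the
function strictly positive for `x > 0`.
-/

noncomputable def criticalCoeff (n : ℕ) (kX lX : ℝ) : ℝ :=
  (lX / n) ^ n * ((n - 1) / kX) ^ (n - 1)

section CriticalCoeff

variable {n : ℕ} {kX lX : ℝ}

lemma criticalCoeff_mul_pow_eq (hn : 1 < n) (hkX : 0 < kX) (hlX : 0 < lX) :
    criticalCoeff n kX lX * (n * kX / ((n - 1) * lX)) ^ n = kX / (n - 1) := by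
  have hn1 : (0 : ℝ) < n - 1 := sub_pos.mpr (by exact_mod_cast hn)
  have hbase : lX / n * (n * kX / ((n - 1) * lX)) = kX / (n - 1) := by field_simp
  set q := kX / (n - 1)
  have hq : q ≠ 0 := (div_pos hkX hn1).ne'
  calc criticalCoeff n kX lX * (n * kX / ((n - 1) * lX)) ^ n
      = q ^ (n - 1) * q * q⁻¹ ^ (n - 1) := by
        rw [criticalCoeff, mul_right_comm, ← mul_pow, hbase, ← inv_div,
          pow_sub_one_mul (by omega)]
    _ = q := by rw [mul_right_comm, ← mul_pow, mul_inv_cancel₀ hq, one_pow, one_mul]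

lemma sub_mul_add_criticalCoeff_mul_pow_nonneg (hn : 1 < n) (hkX : 0 < kX) (hlX : 0 < lX)
    {x : ℝ} (hx : 0 ≤ x) : 0 ≤ kX - lX * x + criticalCoeff n kX lX * x ^ n := by
  have hn1 : (0 : ℝ) < n - 1 := sub_pos.mpr (by exact_mod_cast hn)
  set x₀ : ℝ := n * kX / ((n - 1) * lX)
  have hx₀ : 0 < x₀ := by positivity
  set t := x / x₀
  have hxt : x = x₀ * t := by
    simp only [t]
    field_simp
  have hbernoulli : 0 ≤ t ^ n - 1 - n * (t - 1) := by
    linarith [one_add_mul_sub_le_pow (show -1 ≤ t by linarith [div_nonneg hx hx₀.le]) n]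
  have hlin : lX * x₀ = n * kX / (n - 1) := by
    simp only [x₀]
    field_simp
  have hscale : criticalCoeff n kX lX * x₀ ^ n = kX / (n - 1) :=
    criticalCoeff_mul_pow_eq hn hkX hlX
  have hnormal : kX - lX * x + criticalCoeff n kX lX * x ^ n
      = kX / (n - 1) * (t ^ n - 1 - n * (t - 1)) := by
    rw [hxt, mul_pow, ← mul_assoc, ← mul_assoc, hscale, hlin]
    field_simp
    ring
  rw [hnormal]
  exact mul_nonneg (div_pos hkX hn1).le hbernoulli

end CriticalCoeff

theorem no_steady_states_of_gt_kstar_general (a₁ a₂ : ℕ) (h1 : 1 < a₁) (h2 : a₁ < a₂)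
    (kX lX k : ℝ) (hkX : 0 < kX) (hlX : 0 < lX)
    (hkgt : k > (1 / ((a₂ : ℝ) - (a₁ : ℝ))) * (lX / (a₁ : ℝ)) ^ a₁ *
      (((a₁ : ℝ) - 1) / kX) ^ (a₁ - 1)) :
    ∀ x : ℝ, 0 < x → 0 < kX - lX * x + k * ((a₂ : ℝ) - (a₁ : ℝ)) * x ^ a₁ := by
  intro x hx
  have hgap : (0 : ℝ) < a₂ - a₁ := sub_pos.mpr (by exact_mod_cast h2)
  have hcoeff : criticalCoeff a₁ kX lX < k * (a₂ - a₁) := by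
    rwa [gt_iff_lt, mul_assoc, one_div_mul_eq_div, div_lt_iff₀ hgap] at hkgt
  calc 0 ≤ kX - lX * x + criticalCoeff a₁ kX lX * x ^ a₁ :=
        sub_mul_add_criticalCoeff_mul_pow_nonneg h1 hkX hlX hx.le
    _ < kX - lX * x + k * (a₂ - a₁) * x ^ a₁ := by gcongr

/-- For `k > k*`, the steady-state function `f(x) = k_X - l_X x + k(a₂ - a₁)x^{a₁}` of the
fully open network `0 ⇄ X, a₁X → a₂X` is strictly positive on `(0, ∞)`; in particular it
has no positive zeros. -/
theorem no_steady_states_of_gt_kstar (a₁ a₂ : ℕ) (h1 : 1 < a₁) (h2 : a₁ < a₂)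
    (kX lX k : ℝ) (hkX : 0 < kX) (hlX : 0 < lX) (hk : 0 < k)
    (hkgt : k > (1 / ((a₂ : ℝ) - (a₁ : ℝ))) * (lX / (a₁ : ℝ)) ^ a₁ *
      (((a₁ : ℝ) - 1) / kX) ^ (a₁ - 1)) :
    ∀ x : ℝ, 0 < x → 0 < kX - lX * x + k * ((a₂ : ℝ) - (a₁ : ℝ)) * x ^ a₁ :=
  no_steady_states_of_gt_kstar_general a₁ a₂ h1 h2 kX lX k hkX hlX hkgt
end

section
/- Let b₁, b₂ be integers with b₁ > 1 and b₂ > 1, let k_X, k_Y, l_X, l_Y, k be positive reals, and suppose H < 1. Then there is no pair (x, y) with x > 0 and y > 0 such that f₁(x,y) = 0 and f₂(x,y) = 0. -/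
/-- If `H < 1`, the fully open network `0 ⇄ X, 0 ⇄ Y, X + Y → b₁X + b₂Y` has no positive
mass-action steady states. -/
theorem no_positive_states_of_H_lt_one (b₁ b₂ : ℤ) (hb₁ : 1 < b₁) (hb₂ : 1 < b₂)
    (kX kY lX lY k : ℝ) (hkX : 0 < kX) (hkY : 0 < kY) (hlX : 0 < lX) (hlY : 0 < lY)
    (hk : 0 < k)
    (hH : lY / (4 * k * ((b₂ : ℝ) - 1) * lX * kX) *
      (lX + k / lY * (kX * ((b₂ : ℝ) - 1) - kY * ((b₁ : ℝ) - 1))) ^ 2 < 1) :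
    ¬ ∃ x y : ℝ, 0 < x ∧ 0 < y ∧
      kX - lX * x + k * ((b₁ : ℝ) - 1) * x * y = 0 ∧
      kY - lY * y + k * ((b₂ : ℝ) - 1) * x * y = 0 := by
  rintro ⟨x, y, hx, hy, h1, h2⟩
  set B1 : ℝ := (b₁ : ℝ) - 1 with hB1def
  set B2 : ℝ := (b₂ : ℝ) - 1 with hB2def
  have hb₂' : (1 : ℝ) < (b₂ : ℝ) := by exact_mod_cast hb₂
  have hB2 : 0 < B2 := by simp [hB2def]; linarith
  set D : ℝ := lY * lX + k * (kX * B2 - kY * B1) with hDdef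
  have hden : (0 : ℝ) < 4 * k * B2 * lX * kX := by positivity
  -- rewrite H < 1 as D^2 < 4 k B2 lX kX lY
  have hkey : lY * (lX + k / lY * (kX * B2 - kY * B1)) ^ 2 = D ^ 2 / lY := by
    field_simp [hDdef]
    ring
  have hH' : D ^ 2 < 4 * k * B2 * lX * kX * lY := by
    rw [div_mul_eq_mul_div, div_lt_one hden, hkey, div_lt_iff₀ hlY] at hH
    linarith
  -- quadratic in x
  have hq : k * B2 * lX * x ^ 2 - D * x + lY * kX = 0 := by
    linear_combination (lY - k * x * B2) * h1 + k * x * B1 * h2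
  nlinarith [sq_nonneg (2 * (k * B2 * lX) * x - D), hq, hH']
end

section
/- Let b₁, b₂ be integers with b₁ > 1 and b₂ > 1. Then there exist positive reals k_X, k_Y, l_X, l_Y, k and two distinct pairs (x, y) ≠ (x', y') with x, y, x', y' > 0 such that f₁ and f₂ both vanish at (x, y) and at (x', y'), where f₁(x,y) = k_X − l_X x + k(b₁ − 1)xy and f₂(x,y) = k_Y − l_Y y + k(b₂ − 1)xy. In other words, the fully open network 0 ⇄ X, 0 ⇄ Y, X + Y → b₁X + b₂Y admits multiple positive mass-action steady states. -/
/-! On the diagonal `x = y = t`, taking `k = 1`, `k_X = (b₁ - 1) r s`, `l_X = (b₁ - 1)(r + s)` and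
likewise for `Y` turns both `f₁` and `f₂` into multiples of `(t - r)(t - s)`; with `r = 1`, `s = 2`
the points `(1, 1)` and `(2, 2)` are two positive steady states. -/

lemma vieta_quadratic_eq_zero {a r s t : ℝ} (ht : t = r ∨ t = s) :
    a * (r * s) - a * (r + s) * t + 1 * a * t * t = 0 := by
  rcases ht with rfl | rfl <;> ring

/-- For any integers `b₁ > 1` and `b₂ > 1`, the fully open network
`0 ⇄ X, 0 ⇄ Y, X + Y → b₁X + b₂Y` admits multiple positive mass-action steady states. -/
theorem two_species_atom_admits_MSS (b₁ b₂ : ℤ) (hb₁ : 1 < b₁) (hb₂ : 1 < b₂) :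
    ∃ kX kY lX lY k : ℝ, 0 < kX ∧ 0 < kY ∧ 0 < lX ∧ 0 < lY ∧ 0 < k ∧
      ∃ x y x' y' : ℝ, 0 < x ∧ 0 < y ∧ 0 < x' ∧ 0 < y' ∧ (x, y) ≠ (x', y') ∧
        kX - lX * x + k * ((b₁ : ℝ) - 1) * x * y = 0 ∧
        kY - lY * y + k * ((b₂ : ℝ) - 1) * x * y = 0 ∧
        kX - lX * x' + k * ((b₁ : ℝ) - 1) * x' * y' = 0 ∧
        kY - lY * y' + k * ((b₂ : ℝ) - 1) * x' * y' = 0 := by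
  have ha : (0 : ℝ) < (b₁ : ℝ) - 1 := sub_pos.mpr (by exact_mod_cast hb₁)
  have hc : (0 : ℝ) < (b₂ : ℝ) - 1 := sub_pos.mpr (by exact_mod_cast hb₂)
  refine ⟨((b₁ : ℝ) - 1) * (1 * 2), ((b₂ : ℝ) - 1) * (1 * 2),
    ((b₁ : ℝ) - 1) * (1 + 2), ((b₂ : ℝ) - 1) * (1 + 2), 1,
    mul_pos ha (by norm_num), mul_pos hc (by norm_num), mul_pos ha (by norm_num),
    mul_pos hc (by norm_num), one_pos, 1, 1, 2, 2, one_pos, one_pos, two_pos, two_pos,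
    by norm_num, vieta_quadratic_eq_zero (Or.inl rfl), vieta_quadratic_eq_zero (Or.inl rfl),
    vieta_quadratic_eq_zero (Or.inr rfl), vieta_quadratic_eq_zero (Or.inr rfl)⟩
end

section
/- Let s ≥ 1 and let a, b : Fin s → ℕ. There exists a nonzero vector μ ∈ ℝ^s such that sign(μ_i) = sign((b_i : ℝ) − (a_i : ℝ)) for all i, ∑_i a_i μ_i > 0, and ∑_i a_i μ_i > μ_j for every j, if and only if ∑_{i : a_i < b_i} a_i > 1. -/
/-!
Let `P = {i | a i < b i}` and `S = ∑ a_i μ_i`. The sign condition forces `μ_i ≤ 0` off `P`, so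
`S ≤ ∑_{i ∈ P} a_i μ_i`; every `μ_i` is below `S`, hence this is at most `(∑_{i ∈ P} a_i) S`, with
strict inequality once some `a_i` with `i ∈ P` is nonzero. As `S > 0`, this forces
`∑_{i ∈ P} a_i > 1`. Conversely, put `μ_i = 1` on `P` and `μ_i = ε (b_i - a_i)` off `P`: then
`S = ∑_{i ∈ P} a_i + ε T` for a fixed `T`, which exceeds `1 ≥ max_j μ_j` for small `ε > 0`.
-/

open Finset

namespace Real

theorem sign_nonpos_iff {x : ℝ} : sign x ≤ 0 ↔ x ≤ 0 := by
  unfold sign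
  split_ifs <;> constructor <;> intros <;> linarith

theorem sign_mul_of_pos {c : ℝ} (hc : 0 < c) (x : ℝ) : sign (c * x) = sign x := by
  rcases lt_trichotomy x 0 with hx | rfl | hx
  · rw [sign_of_neg (mul_neg_of_pos_of_neg hc hx), sign_of_neg hx]
  · rw [mul_zero]
  · rw [sign_of_pos (mul_pos hc hx), sign_of_pos hx]

end Real

section

variable {ι : Type*} [Fintype ι]

theorem one_lt_sum_of_lt_weighted_sum (s : Finset ι) (w : ι → ℕ) {μ : ι → ℝ}
    (hout : ∀ i ∉ s, μ i ≤ 0) (hpos : 0 < ∑ i, (w i : ℝ) * μ i)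
    (hlt : ∀ j, μ j < ∑ i, (w i : ℝ) * μ i) : 1 < ∑ i ∈ s, w i := by
  classical
  set S := ∑ i, (w i : ℝ) * μ i
  have hS : S ≤ ∑ i ∈ s, (w i : ℝ) * μ i := by
    have hcompl : ∑ i ∈ sᶜ, (w i : ℝ) * μ i ≤ 0 := sum_nonpos fun i hi =>
      mul_nonpos_of_nonneg_of_nonpos (Nat.cast_nonneg _) (hout i (mem_compl.mp hi))
    linarith [sum_add_sum_compl s fun i => (w i : ℝ) * μ i]
  obtain ⟨k, hk, hwk⟩ : ∃ k ∈ s, w k ≠ 0 := by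
    by_contra! hw
    rw [sum_eq_zero fun i hi => by rw [hw i hi, Nat.cast_zero, zero_mul]] at hS
    linarith
  have hlt_sum : ∑ i ∈ s, (w i : ℝ) * μ i < (∑ i ∈ s, w i : ℕ) * S := by
    rw [Nat.cast_sum, sum_mul]
    exact sum_lt_sum (fun i _ => mul_le_mul_of_nonneg_left (hlt i).le (Nat.cast_nonneg _))
      ⟨k, hk, mul_lt_mul_of_pos_left (hlt k) (Nat.cast_pos.mpr (Nat.pos_of_ne_zero hwk))⟩
  have : (1 : ℝ) < (∑ i ∈ s, w i : ℕ) := lt_of_mul_lt_mul_right (by linarith) hpos.le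
  exact_mod_cast this

theorem exists_pos_one_lt_add_mul {N : ℝ} (hN : 1 < N) (T : ℝ) : ∃ ε > 0, 1 < N + ε * T := by
  have hε : 0 < (N - 1) / (|T| + 1) := div_pos (sub_pos.mpr hN) (by positivity)
  refine ⟨_, hε, ?_⟩
  have hεT : (N - 1) / (|T| + 1) * |T| < N - 1 := by
    rw [div_mul_eq_mul_div, div_lt_iff₀ (by positivity)]
    nlinarith [abs_nonneg T]
  nlinarith [mul_le_mul_of_nonneg_left (neg_abs_le T) hε.le]

theorem exists_pos_one_lt_sum_ite [DecidableEq ι] (s : Finset ι) (w : ι → ℕ) (τ : ι → ℝ)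
    (hs : 1 < ∑ i ∈ s, w i) :
    ∃ ε > 0, 1 < ∑ i, (w i : ℝ) * (if i ∈ s then 1 else ε * τ i) := by
  obtain ⟨ε, hε, hlt⟩ := exists_pos_one_lt_add_mul (N := ∑ i ∈ s, (w i : ℝ))
    (by exact_mod_cast hs) (∑ i ∈ sᶜ, (w i : ℝ) * τ i)
  refine ⟨ε, hε, ?_⟩
  simp only [mul_ite, mul_one, sum_ite, filter_mem_eq_inter, univ_inter]
  convert hlt using 2
  rw [mul_sum]
  exact sum_congr (by ext; simp) fun i _ => by ring

end

theorem ineq_system_solvable_iff_general (s : ℕ) (a b : Fin s → ℕ) :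
    (∃ μ : Fin s → ℝ, μ ≠ 0 ∧
      (∀ i, Real.sign (μ i) = Real.sign ((b i : ℝ) - (a i : ℝ))) ∧
      0 < ∑ i, (a i : ℝ) * μ i ∧
      (∀ j, μ j < ∑ i, (a i : ℝ) * μ i)) ↔
    1 < ∑ i ∈ Finset.univ.filter (fun i => a i < b i), a i := by
  set P := univ.filter fun i => a i < b i
  have hP : ∀ i, i ∈ P ↔ a i < b i := fun i => by simp [P]
  constructor
  · rintro ⟨μ, -, hsign, hpos, hlt⟩
    refine one_lt_sum_of_lt_weighted_sum P a (fun i hi => ?_) hpos hlt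
    rw [← Real.sign_nonpos_iff, hsign, Real.sign_nonpos_iff, sub_nonpos]
    exact_mod_cast not_lt.mp ((hP i).not.mp hi)
  · intro hsum
    obtain ⟨ε, hε, hlt⟩ := exists_pos_one_lt_sum_ite P a (fun i => (b i : ℝ) - a i) hsum
    refine ⟨fun i => if i ∈ P then 1 else ε * ((b i : ℝ) - a i), fun h0 => ?_, fun i => ?_,
      by linarith, fun j => hlt.trans_le' ?_⟩
    · have hzero (i : Fin s) := congrFun h0 i
      simp only [Pi.zero_apply] at hzero
      simp only [hzero, mul_zero, sum_const_zero] at hlt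
      linarith
    · dsimp only
      split_ifs with hi
      · rw [Real.sign_one, Real.sign_of_pos (sub_pos.mpr (by exact_mod_cast (hP i).mp hi))]
      · exact Real.sign_mul_of_pos hε _
    · dsimp only
      split_ifs with hj
      · rfl
      · have : (b j : ℝ) ≤ a j := by exact_mod_cast not_lt.mp ((hP j).not.mp hj)
        nlinarith

/-- The inequality system of the Deficiency One Algorithm for the irreversible one-reaction
fully open network: there is a nonzero `μ ∈ ℝ^s` with `sign(μ_i) = sign(b_i − a_i)` for all
`i`, `∑ a_i μ_i > 0` and `∑ a_i μ_i > μ_j` for all `j`, if and only if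
`∑_{i : a_i < b_i} a_i > 1`. -/
theorem ineq_system_solvable_iff (s : ℕ) (hs : 1 ≤ s) (a b : Fin s → ℕ) :
    (∃ μ : Fin s → ℝ, μ ≠ 0 ∧
      (∀ i, Real.sign (μ i) = Real.sign ((b i : ℝ) - (a i : ℝ))) ∧
      0 < ∑ i, (a i : ℝ) * μ i ∧
      (∀ j, μ j < ∑ i, (a i : ℝ) * μ i)) ↔
    1 < ∑ i ∈ Finset.univ.filter (fun i => a i < b i), a i :=
  ineq_system_solvable_iff_general s a b
end

section
/- Let s ≥ 1 and let a, b : Fin s → ℕ with ∑_{i : a_i < b_i} a_i ≤ 1. Then there is no nonzero vector μ ∈ ℝ^s satisfying all of: sign(μ_i) = sign((b_i : ℝ) − (a_i : ℝ)) for all i, ∑_i b_i μ_i > ∑_i a_i μ_i, ∑_i a_i μ_i > 0, and ∑_i a_i μ_i > μ_j for every j. -/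
/-- The inequality system of the Deficiency One Algorithm for the reversible one-reaction
fully open network: if `∑_{i : a_i < b_i} a_i ≤ 1`, no nonzero `μ ∈ ℝ^s` satisfies
`sign(μ_i) = sign(b_i − a_i)` for all `i`, `∑ b_i μ_i > ∑ a_i μ_i`, `∑ a_i μ_i > 0`, and
`∑ a_i μ_i > μ_j` for all `j`. -/
theorem rev_ineq_system_unsolvable (s : ℕ) (hs : 1 ≤ s) (a b : Fin s → ℕ)
    (hcond : ∑ i ∈ Finset.univ.filter (fun i => a i < b i), a i ≤ 1) :
    ¬ ∃ μ : Fin s → ℝ, μ ≠ 0 ∧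
      (∀ i, Real.sign (μ i) = Real.sign ((b i : ℝ) - (a i : ℝ))) ∧
      (∑ i, (a i : ℝ) * μ i < ∑ i, (b i : ℝ) * μ i) ∧
      0 < ∑ i, (a i : ℝ) * μ i ∧
      (∀ j, μ j < ∑ i, (a i : ℝ) * μ i) := by
  rintro ⟨μ, hne, hsign, hlt, hpos, hmax⟩
  set S := ∑ i, (a i : ℝ) * μ i with hS
  set P := Finset.univ.filter (fun i => a i < b i) with hP
  have hle : S ≤ ∑ i ∈ P, (a i : ℝ) * μ i := by
    rw [hS, ← Finset.sum_filter_add_sum_filter_not Finset.univ (fun i => a i < b i)]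
    have hnp : ∑ i ∈ Finset.univ.filter (fun i => ¬ a i < b i), (a i : ℝ) * μ i ≤ 0 := by
      apply Finset.sum_nonpos
      intro i hi
      simp only [Finset.mem_filter] at hi
      rcases lt_or_eq_of_le (not_lt.mp hi.2) with h | h
      · have hμ : μ i < 0 := by
          have hx := hsign i
          have hneg : ((b i : ℝ) - (a i : ℝ)) < 0 := by
            have : (b i : ℝ) < (a i : ℝ) := by exact_mod_cast h
            linarith
          rw [Real.sign_of_neg hneg] at hx
          rcases lt_trichotomy (μ i) 0 with h' | h' | h'
          · exact h'
          · rw [h', Real.sign_zero] at hx; norm_num at hx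
          · rw [Real.sign_of_pos h'] at hx; norm_num at hx
        have : (0:ℝ) ≤ (a i : ℝ) := Nat.cast_nonneg _
        nlinarith
      · have hμ : μ i = 0 := by
          have hx := hsign i
          have hz : ((b i : ℝ) - (a i : ℝ)) = 0 := by
            have : (b i : ℝ) = (a i : ℝ) := by exact_mod_cast h
            linarith
          rw [hz, Real.sign_zero] at hx
          rcases lt_trichotomy (μ i) 0 with h' | h' | h'
          · rw [Real.sign_of_neg h'] at hx; norm_num at hx
          · exact h'
          · rw [Real.sign_of_pos h'] at hx; norm_num at hx
        simp [hμ]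
    linarith
  rcases Nat.le_one_iff_eq_zero_or_eq_one.mp hcond with h0 | h1
  · have : ∑ i ∈ P, (a i : ℝ) * μ i = 0 := by
      apply Finset.sum_eq_zero
      intro i hi
      have : a i = 0 := by
        have := (Finset.sum_eq_zero_iff.mp h0) i hi
        exact this
      simp [this]
    linarith
  · have hstrict : ∑ i ∈ P, (a i : ℝ) * μ i < ∑ i ∈ P, (a i : ℝ) * S := by
      obtain ⟨i₀, hi₀, hai₀⟩ := Finset.exists_ne_zero_of_sum_ne_zero (h1 ▸ one_ne_zero)
      apply Finset.sum_lt_sum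
      · intro i hi
        have h1' : μ i ≤ S := le_of_lt (hmax i)
        have h2' : (0:ℝ) ≤ (a i : ℝ) := Nat.cast_nonneg _
        nlinarith
      · refine ⟨i₀, hi₀, ?_⟩
        have hpos' : (0:ℝ) < (a i₀ : ℝ) := by
          exact_mod_cast Nat.pos_of_ne_zero hai₀
        exact (mul_lt_mul_iff_right₀ hpos').mpr (hmax i₀)
    have hsum : ∑ i ∈ P, (a i : ℝ) * S = S := by
      rw [← Finset.sum_mul]
      have : (∑ i ∈ P, (a i : ℝ)) = 1 := by
        rw [← Nat.cast_sum]
        exact_mod_cast congrArg (Nat.cast : ℕ → ℝ) h1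
      rw [this, one_mul]
    linarith
end

section
/- Let s ≥ 1, let a, b : Fin s → ℕ with a ≠ b, suppose the reaction ∑ a_i X_i ⇄ ∑ b_i X_i is not a flow reaction (i.e., ∑_i a_i + ∑_i b_i ≠ 1), and suppose ∑_i a_i ≤ 1 or ∑_i b_i ≤ 1. Then for every choice of positive reals k_1,…,k_s, l_1,…,l_s, κ_a > 0 and every κ_b ≥ 0, the system f_i(z) = 0 (1 ≤ i ≤ s), where f_i(z) = k_i − l_i z_i + ((b_i : ℝ) − (a_i : ℝ))(κ_a ∏_j z_j^{a_j} − κ_b ∏_j z_j^{b_j}), has at most one solution z in the open positive orthant of ℝ^s. -/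
open Finset

private lemma sum_eq_one_exists {s : ℕ} (a : Fin s → ℕ) (h : ∑ i, a i = 1) :
    ∃ m, a m = 1 ∧ ∀ i, i ≠ m → a i = 0 := by
  by_cases hex : ∃ m, a m ≠ 0
  · obtain ⟨m, hm⟩ := hex
    have h1 : a m ≤ 1 := h ▸ Finset.single_le_sum (f := a) (fun i _ => Nat.zero_le _) (mem_univ m)
    have ham : a m = 1 := le_antisymm h1 (Nat.one_le_iff_ne_zero.2 hm)
    refine ⟨m, ham, fun i hi => ?_⟩
    have h2 : a m + ∑ j ∈ univ.erase m, a j = 1 := by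
      rw [Finset.add_sum_erase univ a (mem_univ m), h]
    have h3 : ∑ j ∈ univ.erase m, a j = 0 := by omega
    exact Finset.sum_eq_zero_iff.1 h3 i (Finset.mem_erase.2 ⟨hi, mem_univ i⟩)
  · push_neg at hex
    simp [hex] at h

private lemma star_ineq {s : ℕ} (a b : Fin s → ℕ) (z z' : Fin s → ℝ)
    (hz : ∀ i, 0 < z i) (hz' : ∀ i, 0 < z' i)
    (hsum : ∑ i, a i ≤ 1)
    (hmon : ∀ i, a i ≤ b i → z i ≤ z' i)
    (hmon' : ∀ i, b i ≤ a i → z' i ≤ z i) :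
    (∏ i, z' i ^ a i) * ∏ i, z i ^ b i ≤ (∏ i, z i ^ a i) * ∏ i, z' i ^ b i := by
  rcases Nat.le_one_iff_eq_zero_or_eq_one.1 hsum with h | h
  · have ha : ∀ i, a i = 0 := fun i => Finset.sum_eq_zero_iff.1 h i (mem_univ i)
    have hA : ∏ i, z i ^ a i = 1 := Finset.prod_eq_one fun i _ => by rw [ha i, pow_zero]
    have hA' : ∏ i, z' i ^ a i = 1 := Finset.prod_eq_one fun i _ => by rw [ha i, pow_zero]
    rw [hA, hA', one_mul, one_mul]
    exact Finset.prod_le_prod (fun i _ => pow_nonneg (hz i).le _)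
      (fun i _ => pow_le_pow_left₀ (hz i).le (hmon i ((ha i) ▸ Nat.zero_le _)) _)
  · obtain ⟨m, ham, ha0⟩ := sum_eq_one_exists a h
    have hA : ∏ i, z i ^ a i = z m := by
      rw [Finset.prod_eq_single m (fun i _ hi => by rw [ha0 i hi, pow_zero])
        (fun hnm => absurd (mem_univ m) hnm), ham, pow_one]
    have hA' : ∏ i, z' i ^ a i = z' m := by
      rw [Finset.prod_eq_single m (fun i _ hi => by rw [ha0 i hi, pow_zero])
        (fun hnm => absurd (mem_univ m) hnm), ham, pow_one]
    rw [hA, hA']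
    by_cases hbm : b m = 0
    · have hP : ∏ i, z i ^ b i ≤ ∏ i, z' i ^ b i := by
        refine Finset.prod_le_prod (fun i _ => pow_nonneg (hz i).le _) (fun i _ => ?_)
        rcases eq_or_ne i m with rfl | hi
        · simp [hbm]
        · exact pow_le_pow_left₀ (hz i).le (hmon i ((ha0 i hi) ▸ Nat.zero_le _)) _
      have hzm : z' m ≤ z m := hmon' m (by omega)
      calc z' m * ∏ i, z i ^ b i ≤ z m * ∏ i, z i ^ b i :=
            mul_le_mul_of_nonneg_right hzm (Finset.prod_nonneg fun i _ => pow_nonneg (hz i).le _)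
        _ ≤ z m * ∏ i, z' i ^ b i := mul_le_mul_of_nonneg_left hP (hz m).le
    · have hball : ∀ i, z i ≤ z' i := by
        intro i
        rcases eq_or_ne i m with rfl | hi
        · exact hmon i (by omega)
        · exact hmon i ((ha0 i hi) ▸ Nat.zero_le _)
      obtain ⟨t, ht⟩ : ∃ t, b m = t + 1 := ⟨b m - 1, by omega⟩
      rw [← Finset.mul_prod_erase univ (fun i => z i ^ b i) (mem_univ m),
          ← Finset.mul_prod_erase univ (fun i => z' i ^ b i) (mem_univ m)]
      have hQ : ∏ i ∈ univ.erase m, z i ^ b i ≤ ∏ i ∈ univ.erase m, z' i ^ b i :=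
        Finset.prod_le_prod (fun i _ => pow_nonneg (hz i).le _)
          (fun i _ => pow_le_pow_left₀ (hz i).le (hball i) _)
      have h1 : z' m * z m ^ b m ≤ z m * z' m ^ b m := by
        have h2 : z m ^ t ≤ z' m ^ t := pow_le_pow_left₀ (hz m).le (hball m) t
        have h3 := mul_le_mul_of_nonneg_left h2 (mul_pos (hz m) (hz' m)).le
        calc z' m * z m ^ b m = z m * z' m * z m ^ t := by rw [ht, pow_succ]; ring
          _ ≤ z m * z' m * z' m ^ t := h3
          _ = z m * z' m ^ b m := by rw [ht, pow_succ]; ring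
      calc z' m * (z m ^ b m * ∏ i ∈ univ.erase m, z i ^ b i)
          = (z' m * z m ^ b m) * ∏ i ∈ univ.erase m, z i ^ b i := by ring
        _ ≤ (z m * z' m ^ b m) * ∏ i ∈ univ.erase m, z' i ^ b i :=
            mul_le_mul h1 hQ (Finset.prod_nonneg fun i _ => pow_nonneg (hz i).le _)
              (mul_nonneg (hz m).le (pow_nonneg (hz' m).le _))
        _ = z m * (z' m ^ b m * ∏ i ∈ univ.erase m, z' i ^ b i) := by ring

private lemma key_lemma {s : ℕ} (a b : Fin s → ℕ)
    (hlow : (∑ i, a i) ≤ 1 ∨ (∑ i, b i) ≤ 1)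
    (k l : Fin s → ℝ) (κa κb : ℝ)
    (hk : ∀ i, 0 < k i) (hl : ∀ i, 0 < l i) (hκa : 0 < κa) (hκb : 0 ≤ κb)
    (z z' : Fin s → ℝ) (hz : ∀ i, 0 < z i) (hz' : ∀ i, 0 < z' i)
    (heq : ∀ i, l i * z i = k i +
      ((b i : ℝ) - (a i : ℝ)) * (κa * ∏ j, z j ^ (a j) - κb * ∏ j, z j ^ (b j)))
    (heq' : ∀ i, l i * z' i = k i +
      ((b i : ℝ) - (a i : ℝ)) * (κa * ∏ j, z' j ^ (a j) - κb * ∏ j, z' j ^ (b j)))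
    (hlt : κa * ∏ j, z j ^ (a j) - κb * ∏ j, z j ^ (b j)
         < κa * ∏ j, z' j ^ (a j) - κb * ∏ j, z' j ^ (b j)) : False := by
  set A := ∏ j, z j ^ (a j) with hA
  set P := ∏ j, z j ^ (b j) with hP
  set A' := ∏ j, z' j ^ (a j) with hA'
  set P' := ∏ j, z' j ^ (b j) with hP'
  set r := κa * A - κb * P with hr
  set r' := κa * A' - κb * P' with hr'
  have hmon : ∀ i, a i ≤ b i → z i ≤ z' i := by
    intro i hi
    have hc : (0:ℝ) ≤ (b i : ℝ) - (a i : ℝ) := sub_nonneg.2 (by exact_mod_cast hi)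
    nlinarith [heq i, heq' i, hl i, mul_nonneg hc (sub_pos.2 hlt).le]
  have hmon' : ∀ i, b i ≤ a i → z' i ≤ z i := by
    intro i hi
    have hc : (0:ℝ) ≤ (a i : ℝ) - (b i : ℝ) := sub_nonneg.2 (by exact_mod_cast hi)
    nlinarith [heq i, heq' i, hl i, mul_nonneg hc (sub_pos.2 hlt).le]
  have hstar : A' * P ≤ A * P' := by
    rw [hA, hP, hA', hP']
    rcases hlow with hsa | hsb
    · exact star_ineq a b z z' hz hz' hsa hmon hmon'
    · have := star_ineq b a z' z hz' hz hsb hmon' hmon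
      linarith [this]
  have h1 : r' * A ≤ r * A' := by
    have he : r' * A - r * A' = κb * (A' * P - A * P') := by rw [hr, hr']; ring
    have := mul_nonneg hκb (sub_nonneg.2 hstar)
    nlinarith [he, this]
  have h2 : r' * P ≤ r * P' := by
    have he : r' * P - r * P' = κa * (A' * P - A * P') := by rw [hr, hr']; ring
    have := mul_nonneg hκa.le (sub_nonneg.2 hstar)
    nlinarith [he, this]
  have finish : ∀ m : Fin s, r' * z m ≤ r * z' m → False := by
    intro m hm
    have e1 : r' * (l m * z m) ≤ r * (l m * z' m) := by
      calc r' * (l m * z m) = l m * (r' * z m) := by ring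
        _ ≤ l m * (r * z' m) := mul_le_mul_of_nonneg_left hm (hl m).le
        _ = r * (l m * z' m) := by ring
    rw [heq m, heq' m] at e1
    nlinarith [e1, mul_pos (hk m) (sub_pos.2 hlt)]
  rcases hlow with hsa | hsb
  · rcases Nat.le_one_iff_eq_zero_or_eq_one.1 hsa with h0 | h1s
    · have ha : ∀ i, a i = 0 := fun i => Finset.sum_eq_zero_iff.1 h0 i (mem_univ i)
      have hA1 : A = 1 := by
        rw [hA]; exact Finset.prod_eq_one fun i _ => by rw [ha i, pow_zero]
      have hA'1 : A' = 1 := by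
        rw [hA']; exact Finset.prod_eq_one fun i _ => by rw [ha i, pow_zero]
      rw [hA1, hA'1, mul_one, mul_one] at h1
      exact absurd h1 (not_le.2 hlt)
    · obtain ⟨m, ham, ha0⟩ := sum_eq_one_exists a h1s
      have hAm : A = z m := by
        rw [hA, Finset.prod_eq_single m (fun i _ hi => by rw [ha0 i hi, pow_zero])
          (fun hnm => absurd (mem_univ m) hnm), ham, pow_one]
      have hA'm : A' = z' m := by
        rw [hA', Finset.prod_eq_single m (fun i _ hi => by rw [ha0 i hi, pow_zero])
          (fun hnm => absurd (mem_univ m) hnm), ham, pow_one]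
      exact finish m (by rw [← hAm, ← hA'm]; exact h1)
  · rcases Nat.le_one_iff_eq_zero_or_eq_one.1 hsb with h0 | h1s
    · have hb : ∀ i, b i = 0 := fun i => Finset.sum_eq_zero_iff.1 h0 i (mem_univ i)
      have hP1 : P = 1 := by
        rw [hP]; exact Finset.prod_eq_one fun i _ => by rw [hb i, pow_zero]
      have hP'1 : P' = 1 := by
        rw [hP']; exact Finset.prod_eq_one fun i _ => by rw [hb i, pow_zero]
      rw [hP1, hP'1, mul_one, mul_one] at h2
      exact absurd h2 (not_le.2 hlt)
    · obtain ⟨m, hbm, hb0⟩ := sum_eq_one_exists b h1s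
      have hPm : P = z m := by
        rw [hP, Finset.prod_eq_single m (fun i _ hi => by rw [hb0 i hi, pow_zero])
          (fun hnm => absurd (mem_univ m) hnm), hbm, pow_one]
      have hP'm : P' = z' m := by
        rw [hP', Finset.prod_eq_single m (fun i _ hi => by rw [hb0 i hi, pow_zero])
          (fun hnm => absurd (mem_univ m) hnm), hbm, pow_one]
      exact finish m (by rw [← hPm, ← hP'm]; exact h2)

/-- If at least one of the two complexes of the non-flow reaction `∑ a_i X_i ⇄ ∑ b_i X_i`
is the zero complex or unimolecular (`∑ a_i ≤ 1` or `∑ b_i ≤ 1`), then for every choice of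
positive rate constants (with `κ_b ≥ 0` allowing an irreversible reaction), the one-reaction
fully open network has at most one positive mass-action steady state. -/
theorem at_most_one_steady_state_of_low_molecularity (s : ℕ) (hs : 1 ≤ s)
    (a b : Fin s → ℕ) (hab : a ≠ b) (hnonflow : (∑ i, a i) + (∑ i, b i) ≠ 1)
    (hlow : (∑ i, a i) ≤ 1 ∨ (∑ i, b i) ≤ 1)
    (k l : Fin s → ℝ) (κa κb : ℝ) (hk : ∀ i, 0 < k i) (hl : ∀ i, 0 < l i)
    (hκa : 0 < κa) (hκb : 0 ≤ κb) :
    ∀ z z' : Fin s → ℝ, (∀ i, 0 < z i) → (∀ i, 0 < z' i) →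
      (∀ i, k i - l i * z i +
        ((b i : ℝ) - (a i : ℝ)) * (κa * ∏ j, z j ^ (a j) - κb * ∏ j, z j ^ (b j)) = 0) →
      (∀ i, k i - l i * z' i +
        ((b i : ℝ) - (a i : ℝ)) * (κa * ∏ j, z' j ^ (a j) - κb * ∏ j, z' j ^ (b j)) = 0) →
      z = z' := by
  intro z z' hz hz' hf hf'
  have heq : ∀ i, l i * z i = k i +
      ((b i : ℝ) - (a i : ℝ)) * (κa * ∏ j, z j ^ (a j) - κb * ∏ j, z j ^ (b j)) :=
    fun i => by linarith [hf i]
  have heq' : ∀ i, l i * z' i = k i +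
      ((b i : ℝ) - (a i : ℝ)) * (κa * ∏ j, z' j ^ (a j) - κb * ∏ j, z' j ^ (b j)) :=
    fun i => by linarith [hf' i]
  rcases lt_trichotomy (κa * ∏ j, z j ^ (a j) - κb * ∏ j, z j ^ (b j))
      (κa * ∏ j, z' j ^ (a j) - κb * ∏ j, z' j ^ (b j)) with h | h | h
  · exact (key_lemma a b hlow k l κa κb hk hl hκa hκb z z' hz hz' heq heq' h).elim
  · funext i
    have : l i * z i = l i * z' i := by rw [heq i, heq' i, h]
    exact mul_left_cancel₀ (hl i).ne' this
  · exact (key_lemma a b hlow k l κa κb hk hl hκa hκb z' z hz' hz heq' heq h).elim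
end

section
/- Let a₁, a₂ be natural numbers with a₂ > a₁ > 1 and let k_X, l_X, k be positive reals. Define f(x) = k_X − l_X x + k(a₂ − a₁)x^{a₁} and x* = (l_X/(k a₁(a₂ − a₁)))^{1/(a₁ − 1)}. Then: (i) for x > 0, f'(x) = 0 if and only if x = x*; (ii) f(x*) = k_X + l_X(1/a₁ − 1)x*; and (iii) f(x*) < 0 if and only if k < k*, where k* = (1/(a₂ − a₁)) · (l_X/a₁)^{a₁} · ((a₁ − 1)/k_X)^{a₁ − 1}. -/
/-!
On `x > 0` the derivative `-l_X + k a₁ (a₂ - a₁) x^(a₁-1)` is strictly increasing, so it vanishes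
only at `x*`, the point with `k a₁ (a₂ - a₁) x*^(a₁-1) = l_X`. Substituting
`k (a₂ - a₁) x*^a₁ = (l_X / a₁) x*` gives the value `f(x*)`, which is negative exactly when `x*`
exceeds `B = a₁ k_X / (l_X (a₁ - 1))`. Raising both sides to the power `a₁ - 1` and using the
equation of `x*` turns `B < x*` into `k < k*`.
-/

theorem hasDerivAt_sub_mul_add_mul_pow (p q r x : ℝ) (a : ℕ) :
    HasDerivAt (fun x : ℝ => p - q * x + r * x ^ a) (-q + r * (a * x ^ (a - 1))) x := by
  have h : HasDerivAt (fun x : ℝ => p - q * x + r * x ^ a) (-(q * 1) + r * (a * x ^ (a - 1))) x :=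
    (((hasDerivAt_id' x).const_mul q).const_sub p).add ((hasDerivAt_pow a x).const_mul r)
  rwa [mul_one] at h

theorem rpow_one_div_natCast_sub_one_pow {y : ℝ} (hy : 0 ≤ y) {a : ℕ} (ha : 1 < a) :
    (y ^ ((1 : ℝ) / ((a : ℝ) - 1))) ^ (a - 1) = y := by
  rw [← Nat.cast_pred (by omega), one_div, Real.rpow_inv_natCast_pow hy (by omega)]

section CriticalPoint

variable {p q r x₀ : ℝ} {a : ℕ}

theorem deriv_sub_mul_add_mul_pow_eq_zero_iff (ha : 1 < a) (hr : 0 < r)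
    (hx₀ : 0 < x₀) (hcrit : r * a * x₀ ^ (a - 1) = q) {x : ℝ} (hx : 0 < x) :
    deriv (fun x : ℝ => p - q * x + r * x ^ a) x = 0 ↔ x = x₀ := by
  have hra : r * a ≠ 0 := by positivity
  rw [(hasDerivAt_sub_mul_add_mul_pow p q r x a).deriv,
    ← pow_left_inj₀ hx.le hx₀.le (by omega : a - 1 ≠ 0), ← hcrit]
  constructor
  · intro h
    exact mul_left_cancel₀ hra (by linarith)
  · intro h
    rw [h]
    ring

theorem sub_mul_add_mul_pow_eq_of_crit (ha : 0 < a) (hcrit : r * a * x₀ ^ (a - 1) = q) :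
    p - q * x₀ + r * x₀ ^ a = p + q * (1 / a - 1) * x₀ := by
  obtain ⟨m, rfl⟩ : ∃ m, a = m + 1 := ⟨a - 1, by omega⟩
  subst hcrit
  simp only [add_tsub_cancel_right, pow_succ]
  field_simp
  ring

theorem add_mul_one_div_sub_one_mul_neg_iff_of_crit (ha : 1 < a) (hp : 0 < p) (hq : 0 < q)
    (hr : 0 < r) (hx₀ : 0 < x₀) (hcrit : r * a * x₀ ^ (a - 1) = q) :
    p + q * (1 / a - 1) * x₀ < 0 ↔ r < (q / a) ^ a * (((a : ℝ) - 1) / p) ^ (a - 1) := by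
  obtain ⟨m, rfl⟩ : ∃ m, a = m + 1 := ⟨a - 1, by omega⟩
  have hm : 0 < m := by omega
  simp only [add_tsub_cancel_right, Nat.cast_add, Nat.cast_one] at hcrit ⊢
  obtain ⟨B, hB⟩ : ∃ B, B = p * (m + 1) / (q * m) := ⟨_, rfl⟩
  have hBpos : 0 < B := by rw [hB]; positivity
  have hunit : q / (m + 1) * (m / p) * B = 1 := by
    rw [hB]
    field_simp
  have hK : (q / (m + 1)) ^ (m + 1) * (m / p) ^ m * ((m + 1) * B ^ m) = q := by
    calc (q / (m + 1)) ^ (m + 1) * (m / p) ^ m * ((m + 1) * B ^ m)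
        = (q / (m + 1) * (m / p) * B) ^ m * (q / (m + 1) * (m + 1)) := by ring
      _ = q := by rw [hunit, one_pow, div_mul_cancel₀ _ (by positivity), one_mul]
  have hV : p + q * (1 / (m + 1) - 1) * x₀ = (p * (m + 1) - q * m * x₀) / (m + 1) := by
    field_simp
    ring
  calc p + q * (1 / (m + 1) - 1) * x₀ < 0 ↔ B < x₀ := by
        rw [hV, div_lt_iff₀ (by positivity), zero_mul, sub_neg, hB, div_lt_iff₀ (by positivity),
          mul_comm x₀]
    _ ↔ B ^ m < x₀ ^ m := (pow_lt_pow_iff_left₀ hBpos.le hx₀.le hm.ne').symm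
    _ ↔ r * (m + 1) * B ^ m < r * (m + 1) * x₀ ^ m := by
        simp only [mul_assoc, mul_lt_mul_iff_right₀ hr,
          mul_lt_mul_iff_right₀ (show (0 : ℝ) < m + 1 by positivity)]
    _ ↔ r * ((m + 1) * B ^ m) < (q / (m + 1)) ^ (m + 1) * (m / p) ^ m * ((m + 1) * B ^ m) := by
        rw [hK, hcrit, mul_assoc]
    _ ↔ r < (q / (m + 1)) ^ (m + 1) * (m / p) ^ m := mul_lt_mul_iff_left₀ (by positivity)

end CriticalPoint

/-- Properties of the critical point `x* = (l_X/(k a₁(a₂−a₁)))^{1/(a₁−1)}` of the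
steady-state function `f(x) = k_X − l_X x + k(a₂−a₁)x^{a₁}`: (i) `x*` is the unique
positive critical point of `f`; (ii) `f(x*) = k_X + l_X(1/a₁ − 1)x*`; and
(iii) `f(x*) < 0 ↔ k < k*`. -/
theorem critical_point_properties (a₁ a₂ : ℕ) (h1 : 1 < a₁) (h2 : a₁ < a₂)
    (kX lX k : ℝ) (hkX : 0 < kX) (hlX : 0 < lX) (hk : 0 < k) :
    (∀ x : ℝ, 0 < x →
      (deriv (fun x : ℝ => kX - lX * x + k * ((a₂ : ℝ) - (a₁ : ℝ)) * x ^ a₁) x = 0 ↔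
        x = (lX / (k * (a₁ : ℝ) * ((a₂ : ℝ) - (a₁ : ℝ)))) ^ ((1 : ℝ) / ((a₁ : ℝ) - 1)))) ∧
    (kX - lX * (lX / (k * (a₁ : ℝ) * ((a₂ : ℝ) - (a₁ : ℝ)))) ^ ((1 : ℝ) / ((a₁ : ℝ) - 1)) +
      k * ((a₂ : ℝ) - (a₁ : ℝ)) *
        ((lX / (k * (a₁ : ℝ) * ((a₂ : ℝ) - (a₁ : ℝ)))) ^ ((1 : ℝ) / ((a₁ : ℝ) - 1))) ^ a₁
      = kX + lX * (1 / (a₁ : ℝ) - 1) *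
          (lX / (k * (a₁ : ℝ) * ((a₂ : ℝ) - (a₁ : ℝ)))) ^ ((1 : ℝ) / ((a₁ : ℝ) - 1))) ∧
    ((kX - lX * (lX / (k * (a₁ : ℝ) * ((a₂ : ℝ) - (a₁ : ℝ)))) ^ ((1 : ℝ) / ((a₁ : ℝ) - 1)) +
      k * ((a₂ : ℝ) - (a₁ : ℝ)) *
        ((lX / (k * (a₁ : ℝ) * ((a₂ : ℝ) - (a₁ : ℝ)))) ^ ((1 : ℝ) / ((a₁ : ℝ) - 1))) ^ a₁
      < 0) ↔
      k < (1 / ((a₂ : ℝ) - (a₁ : ℝ))) * (lX / (a₁ : ℝ)) ^ a₁ *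
        (((a₁ : ℝ) - 1) / kX) ^ (a₁ - 1)) := by
  have hd : (0 : ℝ) < (a₂ : ℝ) - a₁ := sub_pos.2 (by exact_mod_cast h2)
  rw [mul_right_comm k (a₁ : ℝ)]
  set x₀ := (lX / (k * ((a₂ : ℝ) - a₁) * a₁)) ^ ((1 : ℝ) / ((a₁ : ℝ) - 1))
  have hx₀ : 0 < x₀ := by positivity
  have hcrit : k * ((a₂ : ℝ) - a₁) * a₁ * x₀ ^ (a₁ - 1) = lX := by
    rw [rpow_one_div_natCast_sub_one_pow (by positivity) h1]
    field_simp
  have hr : 0 < k * ((a₂ : ℝ) - a₁) := by positivity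
  refine ⟨fun x hx => deriv_sub_mul_add_mul_pow_eq_zero_iff h1 hr hx₀ hcrit hx,
    sub_mul_add_mul_pow_eq_of_crit (by omega) hcrit, ?_⟩
  rw [sub_mul_add_mul_pow_eq_of_crit (by omega) hcrit,
    add_mul_one_div_sub_one_mul_neg_iff_of_crit h1 hkX hlX hr hx₀ hcrit, mul_assoc (1 / _),
    one_div_mul_eq_div, lt_div_iff₀ hd]
end

section
/- Let s ≥ 1 and let a, b : Fin s → ℕ with a ≠ b, ∑_i a_i ≤ 2, and ∑_i b_i ≤ 2 (a bimolecular one-reaction network). Then for every choice of positive reals k_1,…,k_s, l_1,…,l_s, κ_a > 0 and every κ_b ≥ 0, there do not exist two distinct points x ≠ x' in the open positive orthant of ℝ^s with f(x) = 0 and f(x') = 0, where f_i(z) = k_i − l_i z_i + ((b_i : ℝ) − (a_i : ℝ))(κ_a ∏_j z_j^{a_j} − κ_b ∏_j z_j^{b_j}). -/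
lemma quad_unique_pos (A B C u v : ℝ) (hA : 0 ≤ A) (hC : C < 0) (hu : 0 < u) (hv : 0 < v)
    (h1 : A * u ^ 2 + B * u + C = 0) (h2 : A * v ^ 2 + B * v + C = 0) : u = v := by
  by_contra hne
  have hfac : (u - v) * (A * (u + v) + B) = 0 := by linear_combination h1 - h2
  have h3 : A * (u + v) + B = 0 := by
    rcases mul_eq_zero.1 hfac with h | h
    · exact absurd (sub_eq_zero.1 h) hne
    · exact h
  nlinarith [mul_nonneg hA (mul_pos hu hv).le]

lemma prod_support_single {s : ℕ} (x : Fin s → ℝ) (a : Fin s → ℕ) (i : Fin s)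
    (h : ∀ m, m ≠ i → a m = 0) : ∏ m, x m ^ a m = x i ^ a i :=
  Finset.prod_eq_single i (fun m _ hm => by rw [h m hm, pow_zero])
    (fun h' => absurd (Finset.mem_univ i) h')

lemma prod_support_pair {s : ℕ} (x : Fin s → ℝ) (a : Fin s → ℕ) (i j : Fin s) (hij : i ≠ j)
    (h : ∀ m, m ≠ i → m ≠ j → a m = 0) : ∏ m, x m ^ a m = x i ^ a i * x j ^ a j := by
  rw [← Finset.prod_subset (Finset.subset_univ ({i, j} : Finset (Fin s)))
      (fun m _ hm => by
        simp only [Finset.mem_insert, Finset.mem_singleton, not_or] at hm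
        rw [h m hm.1 hm.2, pow_zero]),
    Finset.prod_pair hij]

set_option maxHeartbeats 1000000 in
/-- Core asymmetric lemma: two positive steady states with `G' < G` are impossible. -/
lemma bimolecular_core (s : ℕ) (a b : Fin s → ℕ)
    (ha : (∑ i, a i) ≤ 2) (hb : (∑ i, b i) ≤ 2)
    (k l : Fin s → ℝ) (κa κb : ℝ) (hk : ∀ i, 0 < k i) (hl : ∀ i, 0 < l i)
    (hκa : 0 < κa) (hκb : 0 ≤ κb)
    (x x' : Fin s → ℝ) (hx : ∀ i, 0 < x i) (hx' : ∀ i, 0 < x' i)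
    (hfx : ∀ i, k i - l i * x i +
        ((b i : ℝ) - (a i : ℝ)) * (κa * ∏ j, x j ^ (a j) - κb * ∏ j, x j ^ (b j)) = 0)
    (hfx' : ∀ i, k i - l i * x' i +
        ((b i : ℝ) - (a i : ℝ)) * (κa * ∏ j, x' j ^ (a j) - κb * ∏ j, x' j ^ (b j)) = 0)
    (hG : κa * ∏ j, x' j ^ (a j) - κb * ∏ j, x' j ^ (b j)
        < κa * ∏ j, x j ^ (a j) - κb * ∏ j, x j ^ (b j)) : False := by
  set G := κa * ∏ j, x j ^ (a j) - κb * ∏ j, x j ^ (b j) with hGdef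
  set G' := κa * ∏ j, x' j ^ (a j) - κb * ∏ j, x' j ^ (b j) with hG'def
  have hxi : ∀ i, l i * x i = k i + ((b i : ℝ) - a i) * G := by
    intro i; linarith [hfx i]
  have hxi' : ∀ i, l i * x' i = k i + ((b i : ℝ) - a i) * G' := by
    intro i; linarith [hfx' i]
  have hdiff : ∀ i, l i * (x i - x' i) = ((b i : ℝ) - a i) * (G - G') := by
    intro i; linear_combination hxi i - hxi' i
  by_cases hcons : ∀ i, a i = b i ∨ a i = 0 ∨ b i = 0
  · -- "consistent" case: the two products move oppositely, contradiction
    have hmono1 : ∀ i, b i ≤ a i → x i ≤ x' i := by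
      intro i h
      have hd := hdiff i
      have hc : ((b i : ℝ) - a i) ≤ 0 := sub_nonpos.2 (Nat.cast_le.2 h)
      have hRHS : ((b i : ℝ) - a i) * (G - G') ≤ 0 :=
        mul_nonpos_of_nonpos_of_nonneg hc (by linarith)
      nlinarith [hl i]
    have hmono2 : ∀ i, a i ≤ b i → x' i ≤ x i := by
      intro i h
      have hd := hdiff i
      have hc : (0:ℝ) ≤ ((b i : ℝ) - a i) := sub_nonneg.2 (Nat.cast_le.2 h)
      have hRHS : 0 ≤ ((b i : ℝ) - a i) * (G - G') :=
        mul_nonneg hc (by linarith)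
      nlinarith [hl i]
    have hPa : (∏ j, x j ^ a j) ≤ ∏ j, x' j ^ a j := by
      refine Finset.prod_le_prod (fun i _ => pow_nonneg (hx i).le _) (fun i _ => ?_)
      rcases hcons i with h | h | h
      · exact pow_le_pow_left₀ (hx i).le (hmono1 i h.ge) _
      · rw [h]; simp
      · exact pow_le_pow_left₀ (hx i).le (hmono1 i (h ▸ Nat.zero_le _)) _
    have hPb : (∏ j, x' j ^ b j) ≤ ∏ j, x j ^ b j := by
      refine Finset.prod_le_prod (fun i _ => pow_nonneg (hx' i).le _) (fun i _ => ?_)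
      rcases hcons i with h | h | h
      · exact pow_le_pow_left₀ (hx' i).le (hmono2 i h.le) _
      · exact pow_le_pow_left₀ (hx' i).le (hmono2 i (h ▸ Nat.zero_le _)) _
      · rw [h]; simp
    have h1 : κa * (∏ j, x j ^ a j) ≤ κa * ∏ j, x' j ^ a j :=
      mul_le_mul_of_nonneg_left hPa hκa.le
    have h2 : κb * (∏ j, x' j ^ b j) ≤ κb * ∏ j, x j ^ b j :=
      mul_le_mul_of_nonneg_left hPb hκb
    rw [hGdef, hG'def] at hG
    linarith
  · push_neg at hcons
    obtain ⟨i, hne_ab, hai0, hbi0⟩ := hcons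
    have hai2 : a i ≤ ∑ j, a j := Finset.single_le_sum (fun _ _ => Nat.zero_le _) (Finset.mem_univ i)
    have hbi2 : b i ≤ ∑ j, b j := Finset.single_le_sum (fun _ _ => Nat.zero_le _) (Finset.mem_univ i)
    have hEa := Finset.add_sum_erase Finset.univ a (Finset.mem_univ i)
    have hEb := Finset.add_sum_erase Finset.univ b (Finset.mem_univ i)
    have hcase : (a i = 1 ∧ b i = 2) ∨ (a i = 2 ∧ b i = 1) := by omega
    rcases hcase with ⟨ha1, hb2⟩ | ⟨ha2, hb1⟩
    · -- Case A : a i = 1, b i = 2, so b = 2eᵢ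
      have hbj : ∀ m, m ≠ i → b m = 0 := by
        intro m hm
        have h0 : ∑ j ∈ Finset.univ.erase i, b j = 0 := by omega
        exact Finset.sum_eq_zero_iff.1 h0 m (Finset.mem_erase.2 ⟨hm, Finset.mem_univ m⟩)
      have hPbx : ∏ j, x j ^ b j = x i ^ 2 := by
        rw [prod_support_single x b i hbj, hb2]
      have hPbx' : ∏ j, x' j ^ b j = x' i ^ 2 := by
        rw [prod_support_single x' b i hbj, hb2]
      have hEi : l i * x i = k i + G := by
        have h := hxi i; rw [ha1, hb2] at h; push_cast at h; linarith
      have hEi' : l i * x' i = k i + G' := by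
        have h := hxi' i; rw [ha1, hb2] at h; push_cast at h; linarith
      by_cases hA1 : ∀ m, m ≠ i → a m = 0
      · -- reaction  Xᵢ ⇄ 2Xᵢ
        have hPax : ∏ j, x j ^ a j = x i := by
          rw [prod_support_single x a i hA1, ha1, pow_one]
        have hPax' : ∏ j, x' j ^ a j = x' i := by
          rw [prod_support_single x' a i hA1, ha1, pow_one]
        have hGx : G = κa * x i - κb * x i ^ 2 := by rw [hGdef, hPax, hPbx]
        have hGx' : G' = κa * x' i - κb * x' i ^ 2 := by rw [hG'def, hPax', hPbx']
        have hq : κb * x i ^ 2 + (l i - κa) * x i + (-(k i)) = 0 := by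
          linear_combination hEi + hGx
        have hq' : κb * x' i ^ 2 + (l i - κa) * x' i + (-(k i)) = 0 := by
          linear_combination hEi' + hGx'
        have heq := quad_unique_pos κb (l i - κa) (-(k i)) (x i) (x' i) hκb
          (by linarith [hk i]) (hx i) (hx' i) hq hq'
        rw [heq] at hEi; linarith
      · -- reaction  Xᵢ + Xⱼ ⇄ 2Xᵢ
        push_neg at hA1
        obtain ⟨j, hji, haj0⟩ := hA1
        have hEaj := Finset.add_sum_erase (Finset.univ.erase i) a
          (Finset.mem_erase.2 ⟨hji, Finset.mem_univ j⟩)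
        have haj1 : a j = 1 := by omega
        have h0 : ∑ m ∈ (Finset.univ.erase i).erase j, a m = 0 := by omega
        have hsupp : ∀ m, m ≠ i → m ≠ j → a m = 0 := fun m hmi hmj =>
          Finset.sum_eq_zero_iff.1 h0 m (by simp [Finset.mem_erase, hmj, hmi])
        have hPax : ∏ m, x m ^ a m = x i * x j := by
          rw [prod_support_pair x a i j (Ne.symm hji) hsupp, ha1, haj1, pow_one, pow_one]
        have hPax' : ∏ m, x' m ^ a m = x' i * x' j := by
          rw [prod_support_pair x' a i j (Ne.symm hji) hsupp, ha1, haj1, pow_one, pow_one]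
        have hGx : G = κa * (x i * x j) - κb * x i ^ 2 := by rw [hGdef, hPax, hPbx]
        have hGx' : G' = κa * (x' i * x' j) - κb * x' i ^ 2 := by rw [hG'def, hPax', hPbx']
        have hEj : l j * x j = k j - G := by
          have h := hxi j; rw [haj1, hbj j hji] at h; push_cast at h; linarith
        have hEj' : l j * x' j = k j - G' := by
          have h := hxi' j; rw [haj1, hbj j hji] at h; push_cast at h; linarith
        have hv : l j * x j = k j + k i - l i * x i := by linarith
        have hv' : l j * x' j = k j + k i - l i * x' i := by linarith
        have hq : (κa * l i + κb * l j) * x i ^ 2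
            + (l i * l j - κa * (k i + k j)) * x i + (-(l j * k i)) = 0 := by
          linear_combination l j * hEi + l j * hGx + κa * x i * hv
        have hq' : (κa * l i + κb * l j) * x' i ^ 2
            + (l i * l j - κa * (k i + k j)) * x' i + (-(l j * k i)) = 0 := by
          linear_combination l j * hEi' + l j * hGx' + κa * x' i * hv'
        have heq := quad_unique_pos (κa * l i + κb * l j) (l i * l j - κa * (k i + k j))
          (-(l j * k i)) (x i) (x' i)
          (by nlinarith [hl i, hl j]) (by nlinarith [hl j, hk i]) (hx i) (hx' i) hq hq'
        rw [heq] at hEi; linarith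
    · -- Case B : a i = 2, b i = 1, so a = 2eᵢ
      have haj : ∀ m, m ≠ i → a m = 0 := by
        intro m hm
        have h0 : ∑ j ∈ Finset.univ.erase i, a j = 0 := by omega
        exact Finset.sum_eq_zero_iff.1 h0 m (Finset.mem_erase.2 ⟨hm, Finset.mem_univ m⟩)
      have hPax : ∏ j, x j ^ a j = x i ^ 2 := by
        rw [prod_support_single x a i haj, ha2]
      have hPax' : ∏ j, x' j ^ a j = x' i ^ 2 := by
        rw [prod_support_single x' a i haj, ha2]
      have hEi : l i * x i = k i - G := by
        have h := hxi i; rw [ha2, hb1] at h; push_cast at h; linarith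
      have hEi' : l i * x' i = k i - G' := by
        have h := hxi' i; rw [ha2, hb1] at h; push_cast at h; linarith
      by_cases hB1 : ∀ m, m ≠ i → b m = 0
      · -- reaction  2Xᵢ ⇄ Xᵢ
        have hPbx : ∏ j, x j ^ b j = x i := by
          rw [prod_support_single x b i hB1, hb1, pow_one]
        have hPbx' : ∏ j, x' j ^ b j = x' i := by
          rw [prod_support_single x' b i hB1, hb1, pow_one]
        have hGx : G = κa * x i ^ 2 - κb * x i := by rw [hGdef, hPax, hPbx]
        have hGx' : G' = κa * x' i ^ 2 - κb * x' i := by rw [hG'def, hPax', hPbx']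
        have hq : κa * x i ^ 2 + (l i - κb) * x i + (-(k i)) = 0 := by
          linear_combination hEi - hGx
        have hq' : κa * x' i ^ 2 + (l i - κb) * x' i + (-(k i)) = 0 := by
          linear_combination hEi' - hGx'
        have heq := quad_unique_pos κa (l i - κb) (-(k i)) (x i) (x' i) hκa.le
          (by linarith [hk i]) (hx i) (hx' i) hq hq'
        rw [heq] at hEi; linarith
      · -- reaction  2Xᵢ ⇄ Xᵢ + Xⱼ
        push_neg at hB1
        obtain ⟨j, hji, hbj0⟩ := hB1
        have hEbj := Finset.add_sum_erase (Finset.univ.erase i) b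
          (Finset.mem_erase.2 ⟨hji, Finset.mem_univ j⟩)
        have hbj1 : b j = 1 := by omega
        have h0 : ∑ m ∈ (Finset.univ.erase i).erase j, b m = 0 := by omega
        have hsupp : ∀ m, m ≠ i → m ≠ j → b m = 0 := fun m hmi hmj =>
          Finset.sum_eq_zero_iff.1 h0 m (by simp [Finset.mem_erase, hmj, hmi])
        have hPbx : ∏ m, x m ^ b m = x i * x j := by
          rw [prod_support_pair x b i j (Ne.symm hji) hsupp, hb1, hbj1, pow_one, pow_one]
        have hPbx' : ∏ m, x' m ^ b m = x' i * x' j := by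
          rw [prod_support_pair x' b i j (Ne.symm hji) hsupp, hb1, hbj1, pow_one, pow_one]
        have hGx : G = κa * x i ^ 2 - κb * (x i * x j) := by rw [hGdef, hPax, hPbx]
        have hGx' : G' = κa * x' i ^ 2 - κb * (x' i * x' j) := by rw [hG'def, hPax', hPbx']
        have hEj : l j * x j = k j + G := by
          have h := hxi j; rw [hbj1, haj j hji] at h; push_cast at h; linarith
        have hEj' : l j * x' j = k j + G' := by
          have h := hxi' j; rw [hbj1, haj j hji] at h; push_cast at h; linarith
        have hv : l j * x j = k j + k i - l i * x i := by linarith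
        have hv' : l j * x' j = k j + k i - l i * x' i := by linarith
        have hq : (κa * l j + κb * l i) * x i ^ 2
            + (l i * l j - κb * (k i + k j)) * x i + (-(l j * k i)) = 0 := by
          linear_combination l j * hEi - l j * hGx + κb * x i * hv
        have hq' : (κa * l j + κb * l i) * x' i ^ 2
            + (l i * l j - κb * (k i + k j)) * x' i + (-(l j * k i)) = 0 := by
          linear_combination l j * hEi' - l j * hGx' + κb * x' i * hv'
        have heq := quad_unique_pos (κa * l j + κb * l i) (l i * l j - κb * (k i + k j))
          (-(l j * k i)) (x i) (x' i)
          (by nlinarith [hl i, hl j]) (by nlinarith [hl j, hk i]) (hx i) (hx' i) hq hq'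
        rw [heq] at hEi; linarith

/-- A bimolecular one-reaction fully open network (each complex of the non-flow reaction
`∑ a_i X_i ⇄ ∑ b_i X_i` has at most two molecules) does not admit multiple positive
mass-action steady states, for any choice of positive rate constants (with `κ_b ≥ 0`
allowing an irreversible reaction). -/
theorem bimolecular_no_MSS (s : ℕ) (hs : 1 ≤ s) (a b : Fin s → ℕ) (hab : a ≠ b)
    (ha : (∑ i, a i) ≤ 2) (hb : (∑ i, b i) ≤ 2)
    (k l : Fin s → ℝ) (κa κb : ℝ) (hk : ∀ i, 0 < k i) (hl : ∀ i, 0 < l i)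
    (hκa : 0 < κa) (hκb : 0 ≤ κb) :
    ¬ ∃ x x' : Fin s → ℝ, (∀ i, 0 < x i) ∧ (∀ i, 0 < x' i) ∧ x ≠ x' ∧
      (∀ i, k i - l i * x i +
        ((b i : ℝ) - (a i : ℝ)) * (κa * ∏ j, x j ^ (a j) - κb * ∏ j, x j ^ (b j)) = 0) ∧
      (∀ i, k i - l i * x' i +
        ((b i : ℝ) - (a i : ℝ)) * (κa * ∏ j, x' j ^ (a j) - κb * ∏ j, x' j ^ (b j)) = 0) := by
  rintro ⟨x, x', hx, hx', hne, hfx, hfx'⟩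
  rcases lt_trichotomy (κa * ∏ j, x j ^ (a j) - κb * ∏ j, x j ^ (b j))
      (κa * ∏ j, x' j ^ (a j) - κb * ∏ j, x' j ^ (b j)) with h | h | h
  · exact bimolecular_core s a b ha hb k l κa κb hk hl hκa hκb x' x hx' hx hfx' hfx h
  · apply hne
    funext i
    have h1 := hfx i
    have h2 := hfx' i
    rw [h] at h1
    have h3 : l i * x i = l i * x' i := by linarith
    exact mul_left_cancel₀ (hl i).ne' h3
  · exact bimolecular_core s a b ha hb k l κa κb hk hl hκa hκb x x' hx hx' hfx hfx' h
end
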